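/- arXiv:2507.23583 — 7 statements merged into one kernel-verified Lean document; each statement's English description precedes it below -/
import Mathlib

section
/- Let R > 0 and k ∈ ℤ. Let θ : (0,R] → ℝ be continuous and differentiable on (0,R), and suppose that ∫₀^R θ(r)²·r dr < ∞, ∫₀^R θ′(r)²·r dr < ∞, and ∫₀^R (θ(r) − kπ)²/r dr < ∞. Then θ(r) → kπ as r → 0⁺; in particular θ extends to a continuous function on [0,R] with value kπ at r = 0. -/
/-!
Put `c = kπ`. The derivative `2 (θ - c) θ'` of `(θ - c)²` is dominated by `(θ - c)² / r + θ'² r`,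
so it is integrable on `(0, R)` and `(θ - c)²` has a limit `L` at `0⁺`. If `L ≠ 0`, then
`(θ - c)² / r ≥ L / (2r)` near `0`, which is not integrable; hence `L = 0`.
-/

open MeasureTheory Set Filter Real Topology

theorem abs_two_mul_mul_le_sq_div_add_sq_mul {u v r : ℝ} (hr : 0 < r) :
    |2 * u * v| ≤ u ^ 2 / r + v ^ 2 * r := by
  rw [div_add' _ _ _ hr.ne', le_div_iff₀ hr, abs_mul, abs_mul, abs_two, ← sq_abs u, ← sq_abs v]
  linarith [sq_nonneg (|u| - |v| * r)]

theorem integrableOn_two_mul_mul_of_sq_div_of_sq_mul {u v : ℝ → ℝ} {s : Set ℝ}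
    (hs : s ⊆ Ioi 0) (hsm : MeasurableSet s)
    (hu : AEStronglyMeasurable u (volume.restrict s))
    (hv : AEStronglyMeasurable v (volume.restrict s))
    (hu2 : IntegrableOn (fun r => u r ^ 2 / r) s) (hv2 : IntegrableOn (fun r => v r ^ 2 * r) s) :
    IntegrableOn (fun r => 2 * u r * v r) s := by
  refine (hu2.add hv2).mono' ((hu.const_mul 2).mul hv) ?_
  filter_upwards [ae_restrict_mem hsm] with r hr
  exact abs_two_mul_mul_le_sq_div_add_sq_mul (hs hr)

theorem exists_tendsto_nhdsGT_of_hasDerivAt_of_integrableOn {E : Type*} [NormedAddCommGroup E]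
    [NormedSpace ℝ E] [CompleteSpace E] {g g' : ℝ → E} {a b : ℝ} (hab : a < b)
    (hderiv : ∀ x ∈ Ioo a b, HasDerivAt g (g' x) x) (hint : IntegrableOn g' (Ioo a b)) :
    ∃ L, Tendsto g (𝓝[>] a) (𝓝 L) := by
  obtain ⟨m, ham, hmb⟩ := exists_between hab
  have hint_am : IntegrableOn g' (uIcc a m) := by
    rw [uIcc_of_le ham.le, integrableOn_Icc_iff_integrableOn_Ioo]
    exact hint.mono_set (Ioo_subset_Ioo_right hmb.le)
  have hftc : ∀ t ∈ Ioc a m, g t = g m - ∫ x in t..m, g' x := fun t ht => by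
    rw [intervalIntegral.integral_eq_sub_of_hasDerivAt, sub_sub_cancel]
    · intro x hx
      rw [uIcc_of_le ht.2] at hx
      exact hderiv x ⟨ht.1.trans_le hx.1, hx.2.trans_lt hmb⟩
    · exact (hint_am.mono_set
        (uIcc_subset_uIcc_right (mem_uIcc_of_le ht.1.le ht.2))).intervalIntegrable
  refine ⟨g m - ∫ x in a..m, g' x, ?_⟩
  have hprim : Tendsto (fun t => ∫ x in t..m, g' x) (𝓝[Ioc a m] a) (𝓝 (∫ x in a..m, g' x)) :=
    ((intervalIntegral.continuousOn_primitive_interval_left hint_am) a left_mem_uIcc).mono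
      (by rw [uIcc_of_le ham.le]; exact Ioc_subset_Icc_self)
  rw [← nhdsWithin_Ioc_eq_nhdsGT ham]
  exact (tendsto_const_nhds.sub hprim).congr'
    (eventually_nhdsWithin_of_forall fun t ht => (hftc t ht).symm)

theorem eq_zero_of_tendsto_nhdsGT_of_integrableOn_div {f : ℝ → ℝ} {L R : ℝ} (hR : 0 < R)
    (hf : Tendsto f (𝓝[>] 0) (𝓝 L)) (hint : IntegrableOn (fun r => f r / r) (Ioo 0 R)) :
    L = 0 := by
  by_contra hL
  have hL2 : 0 < |L| / 2 := by positivity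
  obtain ⟨δ, hδ, hδR, hfδ⟩ : ∃ δ, 0 < δ ∧ δ ≤ R ∧ ∀ r ∈ Ioo 0 δ, |L| / 2 ≤ |f r| := by
    obtain ⟨δ, hδ, hsub⟩ := mem_nhdsGT_iff_exists_Ioo_subset.1
      (hf.abs.eventually (eventually_ge_nhds (half_lt_self (abs_pos.2 hL))))
    exact ⟨min δ R, lt_min hδ hR, min_le_right _ _, fun r hr =>
      hsub ⟨hr.1, hr.2.trans_le (min_le_left _ _)⟩⟩
  have hinv : IntegrableOn (fun r : ℝ => r⁻¹) (Ioo 0 δ) := by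
    refine ((hint.mono_set (Ioo_subset_Ioo_right hδR)).norm.const_mul (|L| / 2)⁻¹).mono'
      measurable_inv.aestronglyMeasurable ?_
    filter_upwards [ae_restrict_mem measurableSet_Ioo] with r hr
    rw [norm_inv, Real.norm_of_nonneg hr.1.le, norm_div, Real.norm_of_nonneg hr.1.le,
      Real.norm_eq_abs, ← mul_div_assoc, le_div_iff₀ hr.1, inv_mul_cancel₀ hr.1.ne',
      le_inv_mul_iff₀ hL2, mul_one]
    exact hfδ r hr
  have := (intervalIntegrable_iff_integrableOn_Ioo_of_le hδ.le).2 hinv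
  simp [intervalIntegrable_inv_iff, hδ.ne] at this

theorem value_at_origin_is_multiple_of_pi_general
    (R : ℝ) (hR : 0 < R) (k : ℤ) (θ : ℝ → ℝ)
    (hcont : ContinuousOn θ (Ioc 0 R))
    (hdiff : ∀ r ∈ Ioo (0:ℝ) R, DifferentiableAt ℝ θ r)
    (h2 : IntegrableOn (fun r => deriv θ r ^ 2 * r) (Ioo 0 R))
    (h3 : IntegrableOn (fun r => (θ r - (k : ℝ) * π) ^ 2 / r) (Ioo 0 R)) :
    Tendsto θ (nhdsWithin 0 (Ioi 0)) (nhds ((k : ℝ) * π)) ∧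
      ∃ Θ : ℝ → ℝ, ContinuousOn Θ (Icc 0 R) ∧ Θ 0 = (k : ℝ) * π ∧
        ∀ r ∈ Ioc (0:ℝ) R, Θ r = θ r := by
  set c := (k : ℝ) * π
  have hderiv : ∀ r ∈ Ioo 0 R,
      HasDerivAt (fun r => (θ r - c) ^ 2) (2 * (θ r - c) * deriv θ r) r := fun r hr => by
    simpa using ((hdiff r hr).hasDerivAt.sub_const c).fun_pow 2
  have hint : IntegrableOn (fun r => 2 * (θ r - c) * deriv θ r) (Ioo 0 R) :=
    integrableOn_two_mul_mul_of_sq_div_of_sq_mul (fun _ hr => hr.1) measurableSet_Ioo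
      (((hcont.mono Ioo_subset_Ioc_self).sub continuousOn_const).aestronglyMeasurable
        measurableSet_Ioo) (measurable_deriv θ).aestronglyMeasurable h3 h2
  obtain ⟨L, hL⟩ := exists_tendsto_nhdsGT_of_hasDerivAt_of_integrableOn hR hderiv hint
  obtain rfl : L = 0 := eq_zero_of_tendsto_nhdsGT_of_integrableOn_div hR hL h3
  have hlim : Tendsto θ (𝓝[>] 0) (𝓝 c) := by
    have habs := hL.sqrt
    simp only [sqrt_sq_eq_abs, sqrt_zero] at habs
    exact tendsto_sub_nhds_zero_iff.1 ((tendsto_zero_iff_abs_tendsto_zero _).2 habs)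
  refine ⟨hlim, Function.update θ 0 c, ?_, Function.update_self .., fun r hr =>
    Function.update_of_ne hr.1.ne' ..⟩
  rw [continuousOn_update_iff, Icc_sdiff_left]
  exact ⟨hcont, fun _ => hlim.mono_left (nhdsWithin_mono _ Ioc_subset_Ioi_self)⟩

/-- **Value at the origin is a multiple of π** (paper's Lemma 4.4).
If `θ : (0,R] → ℝ` is continuous, differentiable on `(0,R)`, and the weighted integrals
`∫₀^R θ² r dr`, `∫₀^R θ′² r dr`, `∫₀^R (θ - kπ)²/r dr` are finite, then `θ(r) → kπ` as `r → 0⁺`,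
and `θ` extends continuously to `[0,R]` with value `kπ` at `0`. -/
theorem value_at_origin_is_multiple_of_pi
    (R : ℝ) (hR : 0 < R) (k : ℤ) (θ : ℝ → ℝ)
    (hcont : ContinuousOn θ (Ioc 0 R))
    (hdiff : ∀ r ∈ Ioo (0:ℝ) R, DifferentiableAt ℝ θ r)
    (h1 : IntegrableOn (fun r => θ r ^ 2 * r) (Ioo 0 R))
    (h2 : IntegrableOn (fun r => deriv θ r ^ 2 * r) (Ioo 0 R))
    (h3 : IntegrableOn (fun r => (θ r - (k : ℝ) * π) ^ 2 / r) (Ioo 0 R)) :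
    Tendsto θ (nhdsWithin 0 (Ioi 0)) (nhds ((k : ℝ) * π)) ∧
      ∃ Θ : ℝ → ℝ, ContinuousOn Θ (Icc 0 R) ∧ Θ 0 = (k : ℝ) * π ∧
        ∀ r ∈ Ioc (0:ℝ) R, Θ r = θ r :=
  value_at_origin_is_multiple_of_pi_general R hR k θ hcont hdiff h2 h3
end

section
/- Let R > 0 and let θ : (0,R] → ℝ be continuous and differentiable on (0,R) with ∫₀^R θ(r)²·r dr < ∞ and ∫₀^R θ′(r)²·r dr < ∞. Then there exists k ∈ ℤ with ∫₀^R (θ(r) − kπ)²/r dr < ∞ if and only if ∫₀^R sin²(θ(r))/r dr < ∞. -/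
open MeasureTheory Set Filter Real Topology Interval

/-!
For `→`, `sin² θ = sin² (θ - kπ) ≤ (θ - kπ)²`.

For `←`, take `r₀` so small that `∫₀^r₀ θ'² r` and `∫₀^r₀ sin² θ / r` are both below `1/4`, and
let `mπ` be the multiple of `π` nearest to `θ r₀`. Then `|θ - mπ| ≤ 3π/4` on `(0, r₀]`: otherwise
`|θ - mπ|` crosses from `3π/4` down to `π/2` over some `[a, b]`, where `sin² θ ≥ 2/9`, so
`log (b/a) < 9/8`; but by AM-GM `π/4 ≤ ∫_a^b |θ'| ≤ ∫_a^b θ'² r + log (b/a) / 4 < 1/4 + 9/32`.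
On that band `(θ - mπ)² ≤ (9π²/8) sin² θ`, and on `(r₀, R)` the weight `1/r` is at most `r / r₀²`.
-/

lemma sin_sq_sub_int_mul_pi (x : ℝ) (k : ℤ) : sin (x - k * π) ^ 2 = sin x ^ 2 := by
  rw [sin_sub_int_mul_pi, mul_pow, ← sq_abs ((-1 : ℝ) ^ k)]
  simp

-- `sin` lies above its chord on `[0, 3π/4]`, and `9π²/8 = (3π/4)² / sin² (3π/4)`.
lemma sq_le_mul_sin_sq {x : ℝ} (hx : |x| ≤ 3 * π / 4) : x ^ 2 ≤ 9 * π ^ 2 / 8 * sin x ^ 2 := by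
  have hπ := pi_pos
  set t := |x| / (3 * π / 4)
  have ht0 : 0 ≤ t := by positivity
  have ht1 : t ≤ 1 := div_le_one_of_le₀ hx (by positivity)
  have hxt : |x| = t * (3 * π / 4) := by simp only [t]; field_simp
  clear_value t
  have hchord : t * (√2 / 2) ≤ sin |x| := by
    have := strictConcaveOn_sin_Icc.concaveOn.2 (show (0:ℝ) ∈ Icc 0 π from ⟨le_rfl, hπ.le⟩)
      (show 3 * π / 4 ∈ Icc 0 π from ⟨by positivity, by linarith⟩) (sub_nonneg.2 ht1) ht0
      (sub_add_cancel 1 t)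
    rwa [smul_eq_mul, smul_eq_mul, smul_eq_mul, smul_eq_mul, mul_zero, zero_add, sin_zero,
      mul_zero, zero_add, ← hxt, show 3 * π / 4 = π - π / 4 by ring, sin_pi_sub,
      sin_pi_div_four] at this
  have hsin : sin x ^ 2 = sin |x| ^ 2 := by
    rcases abs_cases x with ⟨h, _⟩ | ⟨h, _⟩ <;> simp [h]
  calc x ^ 2 = 9 * π ^ 2 / 8 * (t * (√2 / 2)) ^ 2 := by
        rw [← sq_abs x, hxt]
        linear_combination (-9 * π ^ 2 * t ^ 2 / 32) * sq_sqrt (zero_le_two (α := ℝ))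
    _ ≤ 9 * π ^ 2 / 8 * sin x ^ 2 := by
        rw [hsin]; gcongr

lemma abs_sub_round_div_mul_le (x : ℝ) {p : ℝ} (hp : 0 < p) :
    |x - round (x / p) * p| ≤ p / 2 := by
  rw [show x - round (x / p) * p = (x / p - round (x / p)) * p by field_simp, abs_mul,
    abs_of_pos hp]
  nlinarith [abs_sub_round (x / p)]

lemma exists_Ioo_mapsTo_Ioo_of_le_of_le {f : ℝ → ℝ} {p q c d : ℝ} (hpq : p ≤ q)
    (hf : ContinuousOn f (Icc p q)) (hcd : c < d) (hp : d ≤ f p) (hq : f q ≤ c) :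
    ∃ a b, p ≤ a ∧ a < b ∧ b ≤ q ∧ d ≤ f a ∧ f b ≤ c ∧ MapsTo f (Ioo a b) (Ioo c d) := by
  set T := Icc p q ∩ f ⁻¹' Iic c
  have hT : IsClosed T := hf.preimage_isClosed_of_isClosed isClosed_Icc isClosed_Iic
  have hTb : BddBelow T := bddBelow_Icc.mono inter_subset_left
  obtain ⟨⟨hpb, hbq⟩, hb⟩ : sInf T ∈ T := hT.csInf_mem ⟨q, ⟨hpq, le_rfl⟩, hq⟩ hTb
  set b := sInf T
  set U := Icc p b ∩ f ⁻¹' Ici d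
  have hU : IsClosed U := (hf.mono (Icc_subset_Icc_right hbq)).preimage_isClosed_of_isClosed
    isClosed_Icc isClosed_Ici
  have hUb : BddAbove U := bddAbove_Icc.mono inter_subset_left
  obtain ⟨⟨hpa, hab⟩, ha⟩ : sSup U ∈ U := hU.csSup_mem ⟨p, ⟨le_rfl, hpb⟩, hp⟩ hUb
  set a := sSup U
  have hab' : a < b := hab.lt_of_ne fun h => by
    rw [mem_preimage, h] at ha; exact absurd (ha.trans hb) (not_le.2 hcd)
  refine ⟨a, b, hpa, hab', hbq, ha, hb, fun x hx => ⟨?_, ?_⟩⟩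
  · by_contra! h
    exact (csInf_le hTb ⟨⟨hpa.trans hx.1.le, hx.2.le.trans hbq⟩, h⟩).not_gt hx.2
  · by_contra! h
    exact (le_csSup hUb ⟨⟨hpa.trans hx.1.le, hx.2.le⟩, h⟩).not_gt hx.1

lemma abs_le_sq_mul_add_inv {x : ℝ} (y : ℝ) (hx : 0 < x) : |y| ≤ y ^ 2 * x + (4 * x)⁻¹ := by
  have : y ^ 2 * x + (4 * x)⁻¹ - |y| = (2 * x * |y| - 1) ^ 2 / (4 * x) := by
    field_simp; rw [← sq_abs y]; ring
  nlinarith [div_nonneg (sq_nonneg (2 * x * |y| - 1)) (by positivity : (0:ℝ) ≤ 4 * x)]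

lemma abs_sub_le_integral_deriv_sq_mul_add_log {f : ℝ → ℝ} {a b : ℝ} (ha : 0 < a) (hab : a ≤ b)
    (hcont : ContinuousOn f (Icc a b)) (hdiff : ∀ x ∈ Ioo a b, DifferentiableAt ℝ f x)
    (hint : IntervalIntegrable (fun x => deriv f x ^ 2 * x) volume a b) :
    |f b - f a| ≤ (∫ x in a..b, deriv f x ^ 2 * x) + log (b / a) / 4 := by
  have h0 : (0 : ℝ) ∉ [[a, b]] := fun h => by
    rw [uIcc_of_le hab] at h; exact h.1.not_gt ha
  have hinv : IntervalIntegrable (fun x : ℝ => (4 * x)⁻¹) volume a b :=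
    (continuousOn_const.mul continuousOn_id).inv₀ (fun x hx =>
      mul_ne_zero four_ne_zero (ne_of_mem_of_not_mem hx h0)) |>.intervalIntegrable
  have hpos : ∀ x ∈ Ι a b, 0 < x := fun x hx => ha.trans (uIoc_of_le hab ▸ hx).1
  have hderiv : IntervalIntegrable (deriv f) volume a b :=
    (hint.add hinv).mono_fun' (aestronglyMeasurable_deriv f _)
      (ae_restrict_of_forall_mem measurableSet_uIoc fun x hx =>
        abs_le_sq_mul_add_inv _ (hpos x hx))
  calc |f b - f a| = |∫ x in a..b, deriv f x| := by
        rw [intervalIntegral.integral_eq_sub_of_hasDerivAt_of_le hab hcont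
          (fun x hx => (hdiff x hx).hasDerivAt) hderiv]
    _ ≤ ∫ x in a..b, |deriv f x| := intervalIntegral.abs_integral_le_integral_abs hab
    _ ≤ ∫ x in a..b, (deriv f x ^ 2 * x + (4 * x)⁻¹) :=
        intervalIntegral.integral_mono_on hab hderiv.abs (hint.add hinv) fun x hx =>
          abs_le_sq_mul_add_inv _ (ha.trans_le hx.1)
    _ = (∫ x in a..b, deriv f x ^ 2 * x) + log (b / a) / 4 := by
        simp_rw [mul_inv]
        rw [intervalIntegral.integral_add hint (by simpa only [mul_inv] using hinv),
          intervalIntegral.integral_const_mul, integral_inv h0]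
        ring

lemma mul_log_div_le_integral_div {f : ℝ → ℝ} {a b κ : ℝ} (ha : 0 < a) (hab : a ≤ b)
    (hf : ∀ x ∈ Ioo a b, κ ≤ f x) (hint : IntervalIntegrable (fun x => f x / x) volume a b) :
    κ * log (b / a) ≤ ∫ x in a..b, f x / x := by
  have h0 : (0 : ℝ) ∉ [[a, b]] := fun h => by
    rw [uIcc_of_le hab] at h; exact h.1.not_gt ha
  have hinv : IntervalIntegrable (fun x : ℝ => κ / x) volume a b :=
    (continuousOn_const.div continuousOn_id fun x hx =>
      ne_of_mem_of_not_mem hx h0) |>.intervalIntegrable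
  calc κ * log (b / a) = ∫ x in a..b, κ / x := by
        simp_rw [div_eq_mul_inv κ]; rw [intervalIntegral.integral_const_mul, integral_inv h0]
    _ ≤ ∫ x in a..b, f x / x :=
        intervalIntegral.integral_mono_on_of_le_Ioo hab hinv hint fun x hx =>
          div_le_div_of_nonneg_right (hf x hx) (ha.trans hx.1).le

lemma tendsto_intervalIntegral_nhdsGT {E : Type*} [NormedAddCommGroup E] [NormedSpace ℝ E]
    {f : ℝ → E} {a b : ℝ} (hab : a < b) (hf : IntervalIntegrable f volume a b) :
    Tendsto (fun t => ∫ x in a..t, f x) (𝓝[>] a) (𝓝 0) := by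
  have := intervalIntegral.continuousOn_primitive_interval' hf left_mem_uIcc a left_mem_uIcc
  rw [uIcc_of_le hab.le, ContinuousWithinAt, intervalIntegral.integral_same] at this
  exact this.mono_left ((nhdsWithin_Ioo_eq_nhdsGT hab).symm.trans_le
    (nhdsWithin_mono _ Ioo_subset_Icc_self))

lemma integrableOn_sq_sub_const_div {f : ℝ → ℝ} {r₀ R : ℝ} (c : ℝ) (hr₀ : 0 < r₀)
    (hf : ContinuousOn f (Ioo r₀ R)) (h : IntegrableOn (fun r => f r ^ 2 * r) (Ioo r₀ R)) :
    IntegrableOn (fun r => (f r - c) ^ 2 / r) (Ioo r₀ R) := by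
  have hpos : ∀ r ∈ Ioo r₀ R, 0 < r := fun r hr => hr₀.trans hr.1
  refine (h.const_mul (2 / r₀ ^ 2) |>.add
      (integrableOn_const (C := 2 * c ^ 2 / r₀) measure_Ioo_lt_top.ne)).mono'
    ((((hf.sub continuousOn_const).pow 2).div continuousOn_id fun r hr => (hpos r hr).ne')
      |>.aestronglyMeasurable measurableSet_Ioo)
    (ae_restrict_of_forall_mem measurableSet_Ioo fun r hr => ?_)
  have hr_pos := hpos r hr
  rw [norm_of_nonneg (by positivity)]
  calc (f r - c) ^ 2 / r ≤ (2 * f r ^ 2 + 2 * c ^ 2) / r := by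
        gcongr; nlinarith [sq_nonneg (f r + c)]
    _ = 2 * f r ^ 2 * r⁻¹ + 2 * c ^ 2 / r := by ring
    _ ≤ 2 * f r ^ 2 * (r / r₀ ^ 2) + 2 * c ^ 2 / r₀ := by
        gcongr
        · rw [inv_eq_one_div, div_le_div_iff₀ hr_pos (by positivity)]
          nlinarith [hr.1]
        · exact hr.1.le
    _ = 2 / r₀ ^ 2 * (f r ^ 2 * r) + 2 * c ^ 2 / r₀ := by ring

lemma integrableOn_sin_sq_div_of_integrableOn_sq_sub_int_mul_pi_div {θ : ℝ → ℝ} {s : Set ℝ}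
    {k : ℤ} (hs : MeasurableSet s) (hs₀ : s ⊆ Ioi 0) (hθ : ContinuousOn θ s)
    (hk : IntegrableOn (fun r => (θ r - k * π) ^ 2 / r) s) :
    IntegrableOn (fun r => sin (θ r) ^ 2 / r) s := by
  refine hk.mono' ((((continuous_sin.comp_continuousOn hθ).pow 2).div continuousOn_id
      fun r hr => (hs₀ hr).ne').aestronglyMeasurable hs)
    (ae_restrict_of_forall_mem hs fun r hr => ?_)
  have hr₀ : 0 < r := hs₀ hr
  rw [norm_of_nonneg (by positivity), ← sin_sq_sub_int_mul_pi _ k]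
  exact div_le_div_of_nonneg_right sin_sq_le_sq hr₀.le

lemma integrableOn_sq_sub_int_mul_pi_div_of_abs_le {θ : ℝ → ℝ} {s : Set ℝ} {m : ℤ}
    (hs : MeasurableSet s) (hs₀ : s ⊆ Ioi 0) (hθ : ContinuousOn θ s)
    (hband : ∀ r ∈ s, |θ r - m * π| ≤ 3 * π / 4)
    (hsin : IntegrableOn (fun r => sin (θ r) ^ 2 / r) s) :
    IntegrableOn (fun r => (θ r - m * π) ^ 2 / r) s := by
  refine (hsin.const_mul (9 * π ^ 2 / 8)).mono' ((((hθ.sub continuousOn_const).pow 2).div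
      continuousOn_id fun r hr => (hs₀ hr).ne').aestronglyMeasurable hs)
    (ae_restrict_of_forall_mem hs fun r hr => ?_)
  have hr₀ : 0 < r := hs₀ hr
  have hbound := sq_le_mul_sin_sq (hband r hr)
  rw [sin_sq_sub_int_mul_pi] at hbound
  rw [norm_of_nonneg (by positivity), mul_div_assoc']
  exact div_le_div_of_nonneg_right hbound hr₀.le

lemma abs_sub_int_mul_pi_le_of_integral_lt {θ : ℝ → ℝ} {r₀ : ℝ} {m : ℤ} (hr₀ : 0 < r₀)
    (hcont : ContinuousOn θ (Ioc 0 r₀)) (hdiff : ∀ r ∈ Ioo 0 r₀, DifferentiableAt ℝ θ r)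
    (hE : IntervalIntegrable (fun r => deriv θ r ^ 2 * r) volume 0 r₀)
    (hE₀ : ∫ r in 0..r₀, deriv θ r ^ 2 * r < 1 / 4)
    (hS : IntervalIntegrable (fun r => sin (θ r) ^ 2 / r) volume 0 r₀)
    (hS₀ : ∫ r in 0..r₀, sin (θ r) ^ 2 / r < 1 / 4)
    (hm : |θ r₀ - m * π| ≤ π / 2) : ∀ r ∈ Ioc 0 r₀, |θ r - m * π| ≤ 3 * π / 4 := by
  intro r hr
  by_contra! h
  obtain ⟨a, b, hra, hab, hbr₀, hga, hgb, hgab⟩ :=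
    exists_Ioo_mapsTo_Ioo_of_le_of_le (f := fun x => |θ x - m * π|) hr.2
    ((hcont.mono (Icc_subset_Ioc hr.1 le_rfl)).sub continuousOn_const).abs
    (by linarith [pi_pos] : π / 2 < 3 * π / 4) h.le hm
  have ha : 0 < a := hr.1.trans_le hra
  have hsub : [[a, b]] ⊆ [[0, r₀]] := by
    rw [uIcc_of_le hab.le, uIcc_of_le hr₀.le]; exact Icc_subset_Icc ha.le hbr₀
  have hsin : ∀ x ∈ Ioo a b, 2 / 9 ≤ sin (θ x) ^ 2 := fun x hx => by
    have hband := hgab hx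
    have hlower : (π / 2) ^ 2 ≤ (θ x - m * π) ^ 2 := by
      rw [← sq_abs (θ x - m * π)]; exact pow_le_pow_left₀ (by positivity) hband.1.le 2
    have hupper := sq_le_mul_sin_sq hband.2.le
    rw [sin_sq_sub_int_mul_pi] at hupper
    nlinarith [pow_pos pi_pos 2]
  have hlog := mul_log_div_le_integral_div ha hab.le hsin (hS.mono_set hsub)
  have hosc := abs_sub_le_integral_deriv_sq_mul_add_log ha hab.le
    (hcont.mono (Icc_subset_Ioc ha hbr₀))
    (fun x hx => hdiff x ⟨ha.trans hx.1, hx.2.trans_le hbr₀⟩) (hE.mono_set hsub)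
  have hEab : ∫ x in a..b, deriv θ x ^ 2 * x ≤ ∫ x in 0..r₀, deriv θ x ^ 2 * x :=
    intervalIntegral.integral_mono_interval ha.le hab.le hbr₀
      (ae_restrict_of_forall_mem measurableSet_Ioc fun x hx => by have := hx.1; positivity) hE
  have hSab : ∫ x in a..b, sin (θ x) ^ 2 / x ≤ ∫ x in 0..r₀, sin (θ x) ^ 2 / x :=
    intervalIntegral.integral_mono_interval ha.le hab.le hbr₀
      (ae_restrict_of_forall_mem measurableSet_Ioc fun x hx => by have := hx.1; positivity) hS
  have hgap : π / 4 ≤ |θ b - θ a| := calc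
    π / 4 ≤ |θ a - m * π| - |θ b - m * π| := by linarith
    _ ≤ |(θ a - m * π) - (θ b - m * π)| := abs_sub_abs_le_abs_sub _ _
    _ = |θ b - θ a| := by rw [sub_sub_sub_cancel_right, abs_sub_comm]
  linarith [pi_gt_three]

/-- Paper's Lemma 4.5: for `θ : (0,R] → ℝ` continuous, differentiable on `(0,R)`, with
`∫₀^R θ² r dr < ∞` and `∫₀^R θ′² r dr < ∞`, there exists `k ∈ ℤ` with
`∫₀^R (θ - kπ)²/r dr < ∞` if and only if `∫₀^R sin²(θ)/r dr < ∞`. -/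
theorem integrable_sub_multiple_pi_iff_integrable_sin
    (R : ℝ) (hR : 0 < R) (θ : ℝ → ℝ)
    (hcont : ContinuousOn θ (Ioc 0 R))
    (hdiff : ∀ r ∈ Ioo (0:ℝ) R, DifferentiableAt ℝ θ r)
    (h1 : IntegrableOn (fun r => θ r ^ 2 * r) (Ioo 0 R))
    (h2 : IntegrableOn (fun r => deriv θ r ^ 2 * r) (Ioo 0 R)) :
    (∃ k : ℤ, IntegrableOn (fun r => (θ r - (k : ℝ) * π) ^ 2 / r) (Ioo 0 R)) ↔
      IntegrableOn (fun r => Real.sin (θ r) ^ 2 / r) (Ioo 0 R) := by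
  refine ⟨fun ⟨k, hk⟩ => integrableOn_sin_sq_div_of_integrableOn_sq_sub_int_mul_pi_div
    measurableSet_Ioo (fun r hr => hr.1) (hcont.mono Ioo_subset_Ioc_self) hk, fun hsin => ?_⟩
  have hE := (intervalIntegrable_iff_integrableOn_Ioo_of_le hR.le).2 h2
  have hS := (intervalIntegrable_iff_integrableOn_Ioo_of_le hR.le).2 hsin
  obtain ⟨r₀, ⟨hE₀, hS₀⟩, hr₀, hr₀R⟩ :=
    (((tendsto_intervalIntegral_nhdsGT hR hE).eventually_lt_const (by norm_num : (0:ℝ) < 1 / 4)).and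
      ((tendsto_intervalIntegral_nhdsGT hR hS).eventually_lt_const (by norm_num : (0:ℝ) < 1 / 4))
      |>.and (Ioo_mem_nhdsGT hR)).exists
  have hsub : [[0, r₀]] ⊆ [[0, R]] := by
    rw [uIcc_of_le hr₀.le, uIcc_of_le hR.le]; exact Icc_subset_Icc_right hr₀R.le
  have hcont₀ := hcont.mono (Ioc_subset_Ioc_right hr₀R.le)
  have hband := abs_sub_int_mul_pi_le_of_integral_lt hr₀ hcont₀
    (fun r hr => hdiff r ⟨hr.1, hr.2.trans hr₀R⟩) (hE.mono_set hsub) hE₀ (hS.mono_set hsub) hS₀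
    (abs_sub_round_div_mul_le (θ r₀) pi_pos)
  refine ⟨round (θ r₀ / π), ?_⟩
  rw [← Ioc_union_Ioo_eq_Ioo hr₀.le hr₀R]
  exact (integrableOn_sq_sub_int_mul_pi_div_of_abs_le measurableSet_Ioc (fun r hr => hr.1)
      hcont₀ hband (hsin.mono_set (Ioc_subset_Ioo_right hr₀R))).union
    (integrableOn_sq_sub_const_div _ hr₀ (hcont.mono fun r hr => ⟨hr₀.trans hr.1, hr.2.le⟩)
      (h1.mono_set (Ioo_subset_Ioo_left hr₀.le)))
end

section
/- Let U ⊆ ℝ² be a nonempty open connected set. Call a point x in the frontier ∂U accessible if there exists a continuous injective curve γ : [0,1] → closure(U) with γ(0) = x and γ(s) ∈ U for every s ∈ (0,1]. Then the set of accessible points is dense in ∂U: for every x ∈ ∂U and every ε > 0 there exists an accessible point y ∈ ∂U with |x − y| < ε. -/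
open Set Metric

/-- **Density of accessible boundary points** (Newman; used in the paper's Lemma 6.3).
Let `U ⊆ ℝ²` be a nonempty open connected set. A point `x ∈ ∂U` is accessible if there is a
continuous injective curve `γ : [0,1] → closure U` with `γ 0 = x` and `γ s ∈ U` for `s ∈ (0,1]`.
The accessible points are dense in `∂U`. -/
theorem accessible_boundary_points_dense
    (U : Set (EuclideanSpace ℝ (Fin 2)))
    (hopen : IsOpen U) (hconn : IsConnected U)
    (x : EuclideanSpace ℝ (Fin 2)) (hx : x ∈ frontier U)
    (ε : ℝ) (hε : 0 < ε) :
    ∃ y ∈ frontier U, dist x y < ε ∧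
      ∃ γ : ℝ → EuclideanSpace ℝ (Fin 2),
        ContinuousOn γ (Icc 0 1) ∧ InjOn γ (Icc 0 1) ∧
        γ 0 = y ∧ (∀ s ∈ Icc (0:ℝ) 1, γ s ∈ closure U) ∧
        ∀ s ∈ Ioc (0:ℝ) 1, γ s ∈ U := by
  have hxU : x ∉ U := fun h => hx.2 (by rwa [hopen.interior_eq])
  have hxcl : x ∈ closure U := hx.1
  obtain ⟨z, hzU, hzd⟩ : ∃ z ∈ U, dist x z < ε :=
    Metric.mem_closure_iff.1 hxcl ε hε
  have hzx : z - x ≠ 0 := sub_ne_zero.2 (fun h => hxU (h ▸ hzU))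
  set f : ℝ → EuclideanSpace ℝ (Fin 2) := fun t => x + t • (z - x) with hf
  have hfc : Continuous f := by continuity
  have hf0 : f 0 = x := by simp [hf]
  have hf1 : f 1 = z := by simp [hf]
  set A : Set ℝ := Icc 0 1 ∩ f ⁻¹' Uᶜ with hA
  have hAc : IsCompact A :=
    isCompact_Icc.inter_right (hopen.isClosed_compl.preimage hfc)
  have hAne : A.Nonempty := ⟨0, ⟨le_refl 0, zero_le_one⟩, by simp [hf0, hxU]⟩
  set T : ℝ := sSup A with hT
  have hTA : T ∈ A := hAc.sSup_mem hAne
  have hT0 : 0 ≤ T := hTA.1.1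
  have hT1 : T ≤ 1 := hTA.1.2
  have hTne1 : T ≠ 1 := fun h => hTA.2 (by rw [h, hf1]; exact hzU)
  have hTlt1 : T < 1 := lt_of_le_of_ne hT1 hTne1
  have hfTU : f T ∉ U := hTA.2
  -- points strictly after T are in U
  have hafter : ∀ t, T < t → t ≤ 1 → f t ∈ U := by
    intro t ht ht1
    by_contra h
    exact not_lt.2 (le_csSup hAc.bddAbove ⟨⟨hT0.trans ht.le, ht1⟩, h⟩) ht
  -- y := f T is in the closure of U
  have hycl : f T ∈ closure U := by
    have h1 : T ∈ closure (Ioc T 1) := by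
      rw [closure_Ioc (ne_of_lt hTlt1)]
      exact ⟨le_refl T, hT1⟩
    have h2 : f T ∈ closure (f '' Ioc T 1) :=
      (image_closure_subset_closure_image hfc) ⟨T, h1, rfl⟩
    refine closure_mono ?_ h2
    rintro _ ⟨t, ⟨ht1, ht2⟩, rfl⟩
    exact hafter t ht1 ht2
  have hyfr : f T ∈ frontier U := by
    rw [frontier_eq_closure_inter_closure, hopen.isClosed_compl.closure_eq]
    exact ⟨hycl, hfTU⟩
  have hdist : dist x (f T) < ε := by
    have : dist x (f T) = T * ‖z - x‖ := by
      simp [hf, dist_eq_norm, norm_smul, abs_of_nonneg hT0]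
    rw [this]
    have hzn : ‖z - x‖ = dist x z := by rw [dist_eq_norm, norm_sub_rev]
    calc T * ‖z - x‖ ≤ 1 * ‖z - x‖ := by
          apply mul_le_mul_of_nonneg_right hT1 (norm_nonneg _)
      _ = dist x z := by rw [one_mul, hzn]
      _ < ε := hzd
  clear_value A T
  refine ⟨f T, hyfr, hdist, fun s => f (T + s * (1 - T)), ?_, ?_, ?_, ?_, ?_⟩
  · exact (hfc.comp (by continuity)).continuousOn
  · intro a _ b _ hab
    simp only [hf] at hab
    have := add_left_cancel hab
    have h2 : (T + a * (1 - T)) = (T + b * (1 - T)) :=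
      smul_left_injective ℝ hzx this
    have h3 : a * (1 - T) = b * (1 - T) := by linarith [h2]
    exact mul_right_cancel₀ (by linarith : (1 : ℝ) - T ≠ 0) h3
  · simp
  · intro s hs
    rcases eq_or_lt_of_le hs.1 with h | h
    · simpa [← h] using hycl
    · exact subset_closure (hafter _ (by linarith [mul_pos h (sub_pos.2 hTlt1)])
        (by linarith [mul_le_mul_of_nonneg_right hs.2 (by linarith : (0:ℝ) ≤ 1 - T)]))
  · intro s hs
    exact hafter _ (by linarith [mul_pos hs.1 (sub_pos.2 hTlt1)])
        (by linarith [mul_le_mul_of_nonneg_right hs.2 (by linarith : (0:ℝ) ≤ 1 - T)])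
end

section
/- Let k ≥ 1 be an integer and define ψ(r) = 4·arctan(r^k). Then for every r > 0 one has ψ″(r) + ψ′(r)/r − k²·sin(2ψ(r))/(2r²) = k²·r^{−2}·sin(ψ(r))·(1 − cos(ψ(r))). In particular this quantity is ≥ 0 for every r ∈ (0,1] and vanishes at r = 1; moreover 0 ≤ ψ(r) ≤ π for all r ∈ [0,1] and ψ(1) = π. -/
/-!
Since `sin (2 arctan t) = 2t / (1 + t²)`, the profile `ψ = 4 arctan (r^k)` solves the first-order
equation `r ψ' = 2k sin (ψ/2)`. Differentiating it gives `ψ'' + ψ'/r = k² sin ψ / r²`, hence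
`τ(ψ) = k² r⁻² (sin ψ - sin ψ cos ψ)`. The sign statements come from `0 ≤ ψ ≤ π` on `[0, 1]`,
as `arctan` is increasing with `arctan 1 = π / 4`.
-/

open Real Set Filter

theorem sin_two_mul_arctan (x : ℝ) : sin (2 * arctan x) = 2 * x / (1 + x ^ 2) := by
  rw [sin_two_mul, ← tan_mul_cos (cos_arctan_pos x).ne', tan_arctan, div_eq_mul_one_div,
    ← cos_sq_arctan]
  ring

theorem tau_eq_of_hasDerivAt {ψ : ℝ → ℝ} {c r : ℝ} (hr : 0 < r)
    (hψ : ∀ s > 0, HasDerivAt ψ (2 * c * sin (ψ s / 2) / s) s) :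
    deriv (deriv ψ) r + deriv ψ r / r - c ^ 2 * sin (2 * ψ r) / (2 * r ^ 2)
      = c ^ 2 / r ^ 2 * sin (ψ r) * (1 - cos (ψ r)) := by
  have hderiv : deriv ψ =ᶠ[nhds r] fun s => 2 * c * sin (ψ s / 2) / s :=
    eventually_of_mem (Ioi_mem_nhds hr) fun s hs => (hψ s hs).deriv
  have hderiv2 : HasDerivAt (fun s => 2 * c * sin (ψ s / 2) / s)
      ((2 * c * (cos (ψ r / 2) * (2 * c * sin (ψ r / 2) / r / 2)) * r
        - 2 * c * sin (ψ r / 2) * 1) / r ^ 2) r :=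
    ((((hψ r hr).div_const 2).sin).const_mul (2 * c)).div (hasDerivAt_id r) hr.ne'
  rw [hderiv.deriv_eq, hderiv2.deriv, (hψ r hr).deriv]
  obtain ⟨a, ha⟩ : ∃ a, ψ r = 2 * a := ⟨ψ r / 2, by ring⟩
  rw [ha, mul_div_cancel_left₀ a two_ne_zero]
  simp only [sin_two_mul, cos_two_mul]
  field_simp
  ring

theorem hasDerivAt_four_mul_arctan_pow (k : ℕ) {r : ℝ} (hr : 0 < r) :
    HasDerivAt (fun s => 4 * arctan (s ^ k))
      (2 * k * sin (4 * arctan (r ^ k) / 2) / r) r := by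
  have hpow : (k : ℝ) * r ^ (k - 1) = k * r ^ k / r := by
    rcases k with _ | k
    · simp
    · rw [pow_succ, Nat.add_sub_cancel, mul_div_assoc, mul_div_cancel_right₀ _ hr.ne']
  refine (((hasDerivAt_pow k r).arctan).const_mul 4).congr_deriv ?_
  rw [mul_div_right_comm 4 _ 2, show (4 : ℝ) / 2 = 2 by norm_num, sin_two_mul_arctan, hpow]
  field_simp
  ring

theorem four_mul_arctan_mem_Icc {x : ℝ} (hx : x ∈ Icc (0 : ℝ) 1) :
    4 * arctan x ∈ Icc 0 π := by
  have h0 : 0 ≤ arctan x := arctan_zero ▸ arctan_strictMono.monotone hx.1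
  have h1 : arctan x ≤ π / 4 := arctan_one ▸ arctan_strictMono.monotone hx.2
  constructor <;> linarith

theorem four_arctan_initial_data_general
    (k : ℕ)
    (ψ : ℝ → ℝ) (hψ : ∀ r, ψ r = 4 * arctan (r ^ k)) :
    (∀ r : ℝ, 0 < r →
      deriv (deriv ψ) r + deriv ψ r / r - (k : ℝ) ^ 2 * sin (2 * ψ r) / (2 * r ^ 2)
        = (k : ℝ) ^ 2 / r ^ 2 * sin (ψ r) * (1 - cos (ψ r))) ∧
    (∀ r ∈ Ioc (0:ℝ) 1, 0 ≤ (k : ℝ) ^ 2 / r ^ 2 * sin (ψ r) * (1 - cos (ψ r))) ∧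
    ((k : ℝ) ^ 2 / (1:ℝ) ^ 2 * sin (ψ 1) * (1 - cos (ψ 1)) = 0) ∧
    (∀ r ∈ Icc (0:ℝ) 1, 0 ≤ ψ r ∧ ψ r ≤ π) ∧
    ψ 1 = π := by
  obtain rfl : ψ = fun r => 4 * arctan (r ^ k) := funext hψ
  have hbound (r : ℝ) (hr : r ∈ Icc (0 : ℝ) 1) : 4 * arctan (r ^ k) ∈ Icc 0 π :=
    four_mul_arctan_mem_Icc ⟨pow_nonneg hr.1 k, pow_le_one₀ hr.1 hr.2⟩
  have hψ1 : 4 * arctan ((1 : ℝ) ^ k) = π := by rw [one_pow, arctan_one]; ring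
  refine ⟨fun r hr => tau_eq_of_hasDerivAt hr fun s hs => hasDerivAt_four_mul_arctan_pow k hs,
    fun r hr => ?_, by simp only [hψ1, sin_pi]; ring, hbound, hψ1⟩
  obtain ⟨h0, hπ⟩ := hbound r (Ioc_subset_Icc_self hr)
  have hsin := sin_nonneg_of_nonneg_of_le_pi h0 hπ
  have hcos := cos_le_one (4 * arctan (r ^ k))
  exact mul_nonneg (by positivity) (by linarith)

/-- For `ψ(r) = 4·arctan(r^k)` one has
`τ(ψ)(r) = ψ'' + ψ'/r - k²·sin(2ψ)/(2r²) = k² r⁻² sin(ψ)(1 - cos ψ)` for all `r > 0`;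
in particular `τ(ψ) ≥ 0` on `(0,1]` and `τ(ψ)(1) = 0`; moreover `0 ≤ ψ ≤ π` on `[0,1]`
and `ψ(1) = π`. -/
theorem four_arctan_initial_data
    (k : ℕ) (hk : 1 ≤ k)
    (ψ : ℝ → ℝ) (hψ : ∀ r, ψ r = 4 * arctan (r ^ k)) :
    (∀ r : ℝ, 0 < r →
      deriv (deriv ψ) r + deriv ψ r / r - (k : ℝ) ^ 2 * sin (2 * ψ r) / (2 * r ^ 2)
        = (k : ℝ) ^ 2 / r ^ 2 * sin (ψ r) * (1 - cos (ψ r))) ∧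
    (∀ r ∈ Ioc (0:ℝ) 1, 0 ≤ (k : ℝ) ^ 2 / r ^ 2 * sin (ψ r) * (1 - cos (ψ r))) ∧
    ((k : ℝ) ^ 2 / (1:ℝ) ^ 2 * sin (ψ 1) * (1 - cos (ψ 1)) = 0) ∧
    (∀ r ∈ Icc (0:ℝ) 1, 0 ≤ ψ r ∧ ψ r ≤ π) ∧
    ψ 1 = π :=
  four_arctan_initial_data_general k ψ hψ
end

section
/- Let k ≥ 1 be an integer, 0 < T ≤ ∞, and let h₁, h₂ : [0,1] × [0,T) → ℝ be continuous functions which on (0,1) × (0,T) have continuous partial derivatives ∂_t h_i, ∂_r h_i, ∂_r² h_i satisfying ∂_t h_i(r,t) = ∂_r² h_i(r,t) + ∂_r h_i(r,t)/r − k²·sin(2·h_i(r,t))/(2r²). Let 0 ≤ t₁ < t₂ < T and 0 ≤ R₁ < R₂ ≤ 1; if R₁ = 0, assume in addition that either h₁(0,t) ≠ h₂(0,t) for every t ∈ [0,T), or there is m ∈ ℤ with h₁(0,t) = h₂(0,t) = mπ for every t ∈ [0,T). Then every nonempty connected component A of the set {(r,t) ∈ [R₁,R₂] × [t₁,t₂]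 : h₁(r,t) > h₂(r,t)} intersects ({R₁} × [t₁,t₂]) ∪ ({R₂} × [t₁,t₂]) ∪ ([R₁,R₂] × {t₁}). -/
open Real Set

/-- Partial derivative in the radial variable `r` of `h(r,t)`. -/
noncomputable def pdr (h : ℝ × ℝ → ℝ) (p : ℝ × ℝ) : ℝ :=
  deriv (fun r => h (r, p.2)) p.1

/-- Second partial derivative in `r` of `h(r,t)`. -/
noncomputable def pdrr (h : ℝ × ℝ → ℝ) (p : ℝ × ℝ) : ℝ :=
  deriv (fun r => pdr h (r, p.2)) p.1

/-- Partial derivative in the time variable `t` of `h(r,t)`. -/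
noncomputable def pdt (h : ℝ × ℝ → ℝ) (p : ℝ × ℝ) : ℝ :=
  deriv (fun t => h (p.1, t)) p.2

/-- `h` is a classical solution of the `k`-equivariant radial harmonic map heat flow equation
`∂_t h = ∂_r² h + ∂_r h / r − k² sin(2h)/(2r²)` on the set `S`: the relevant partial derivatives
exist, are continuous on `S`, and satisfy the equation there. -/
def IsClassicalSol (k : ℕ) (S : Set (ℝ × ℝ)) (h : ℝ × ℝ → ℝ) : Prop :=
  (∀ p ∈ S, DifferentiableAt ℝ (fun r => h (r, p.2)) p.1 ∧
      DifferentiableAt ℝ (fun r => pdr h (r, p.2)) p.1 ∧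
      DifferentiableAt ℝ (fun t => h (p.1, t)) p.2) ∧
  ContinuousOn (pdr h) S ∧ ContinuousOn (pdrr h) S ∧ ContinuousOn (pdt h) S ∧
  ∀ p ∈ S, pdt h p = pdrr h p + pdr h p / p.1 - (k : ℝ) ^ 2 * sin (2 * h p) / (2 * p.1 ^ 2)

/-! A component `A` of `{h₁ > h₂}` in the convex rectangle is a relative neighbourhood of each
point of its closure where `h₁ > h₂`, so `h₁ = h₂` on `closure A \ A`. Hence `(h₁ - h₂) e^{-L t}`
attains its positive maximum over `closure A` at a point of `A`. If `A` missed the lateral and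
initial boundary, that point has `R₁ < r < R₂` and `t₁ < t`, so there `∂_r (h₁ - h₂) = 0`,
`∂_r² (h₁ - h₂) ≤ 0` and `∂_t (h₁ - h₂) ≥ L (h₁ - h₂)`, and subtracting the two equations gives
`L (h₁ - h₂) ≤ k² (sin 2h₂ - sin 2h₁) / (2r²)`.

The right side is at most `(k² / δ²) (h₁ - h₂)` wherever `r ≥ δ` (`sin` is 1-Lipschitz) or
`sin 2h₂ ≤ sin 2h₁`, and some `δ > 0` covers all of `A`: `δ = R₁` if `R₁ > 0`; if `h₁ ≠ h₂` on the
axis, `A` keeps a positive distance from it; if `h₁ = h₂ = mπ` on the axis, then near it both lie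
within `π/4` of `mπ`, where `x ↦ sin 2x` is increasing. `L = k² / δ² + 1` is a contradiction. -/

open Filter Topology Metric

lemma IsLocalMax.hasDerivAt_deriv_nonpos {f f' : ℝ → ℝ} {a d : ℝ} (hmax : IsLocalMax f a)
    (hf : ∀ᶠ x in 𝓝 a, HasDerivAt f (f' x) x) (hf' : HasDerivAt f' d a) : d ≤ 0 := by
  by_contra! hd
  have hf'a : f' a = 0 := hmax.hasDerivAt_eq_zero hf.self_of_nhds
  have hslope : ∀ᶠ x in 𝓝[>] a, 0 < slope f' a x :=
    ((hasDerivAt_iff_tendsto_slope.mp hf').mono_left (nhdsGT_le_nhdsNE a)).eventually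
      (eventually_gt_nhds hd)
  have hright : ∀ᶠ x in 𝓝[>] a, 0 < f' x ∧ HasDerivAt f (f' x) x ∧ f x ≤ f a := by
    filter_upwards [hslope, self_mem_nhdsWithin, nhdsWithin_le_nhds (hf.and hmax)]
      with x hx hax hfx
    exact ⟨pos_of_slope_pos hax hx hf'a, hfx⟩
  obtain ⟨u, hau, hu⟩ := (nhdsGT_basis a).eventually_iff.mp hright
  obtain ⟨b, hb⟩ := nonempty_Ioo.mpr hau
  have hderiv : ∀ x ∈ Icc a b, HasDerivAt f (f' x) x := fun x hx =>
    hx.1.eq_or_lt.elim (fun h => h ▸ hf.self_of_nhds) fun h => (hu ⟨h, hx.2.trans_lt hb.2⟩).2.1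
  obtain ⟨c, hc, hfc⟩ := exists_hasDerivAt_eq_slope f f' hb.1
    (fun x hx => (hderiv x hx).continuousAt.continuousWithinAt)
    (fun x hx => hderiv x (Ioo_subset_Icc_self hx))
  have hc_pos := (hu ⟨hc.1, hc.2.trans hb.2⟩).1
  rw [hfc] at hc_pos
  exact hc_pos.not_ge <| div_nonpos_of_nonpos_of_nonneg (sub_nonpos.mpr (hu hb).2.2)
    (sub_nonneg.mpr hb.1.le)

lemma IsLocalMaxOn.hasDerivAt_nonneg_of_Iic {f : ℝ → ℝ} {a d : ℝ}
    (h : IsLocalMaxOn f (Iic a) a) (hf : HasDerivAt f d a) : 0 ≤ d := by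
  have hcone : (-1 : ℝ) ∈ posTangentConeAt (Iic a) a :=
    mem_posTangentConeAt_of_segment_subset (by
      rw [segment_symm, segment_eq_Icc (by linarith)]; exact Icc_subset_Iic_self)
  simpa using h.hasFDerivWithinAt_nonpos hf.hasFDerivAt.hasFDerivWithinAt hcone

lemma mul_le_of_isLocalMaxOn_mul_exp {g : ℝ → ℝ} {g' L t : ℝ}
    (hmax : IsLocalMaxOn (fun s => g s * exp (-L * s)) (Iic t) t) (hg : HasDerivAt g g' t) :
    L * g t ≤ g' := by
  have hd : HasDerivAt (fun s => g s * exp (-L * s))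
      (g' * exp (-L * t) + g t * (exp (-L * t) * -L)) t :=
    hg.mul (((hasDerivAt_id t).const_mul (-L)).exp.congr_deriv (by simp only [id]; ring))
  have := hmax.hasDerivAt_nonneg_of_Iic hd
  nlinarith [exp_pos (-L * t)]

lemma connectedComponentIn_mem_nhdsWithin_of_mem_closure {E : Type*} [NormedAddCommGroup E]
    [NormedSpace ℝ E] {Q S : Set E} {x q : E} (hQ : Convex ℝ Q) (hSQ : S ⊆ Q)
    (hS : S ∈ 𝓝[Q] q) (hq : q ∈ closure (connectedComponentIn S x)) :
    connectedComponentIn S x ∈ 𝓝[Q] q := by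
  obtain ⟨ε, hε, hball⟩ := Metric.mem_nhdsWithin_iff.mp hS
  obtain ⟨a, haC, hqa⟩ := Metric.mem_closure_iff.mp hq ε hε
  have haN : a ∈ ball q ε ∩ Q := ⟨mem_ball'.mpr hqa, hSQ (connectedComponentIn_subset _ _ haC)⟩
  refine Metric.mem_nhdsWithin_iff.mpr ⟨ε, hε, ?_⟩
  rw [connectedComponentIn_eq haC]
  exact ((convex_ball q ε).inter hQ).isPreconnected.subset_connectedComponentIn haN hball

section LtComponent

def ltComponent {X : Type*} [TopologicalSpace X] (Q : Set X) (h₁ h₂ : X → ℝ) (p₀ : X) : Set X :=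
  connectedComponentIn {p | p ∈ Q ∧ h₂ p < h₁ p} p₀

lemma ltComponent_subset {X : Type*} [TopologicalSpace X] {Q : Set X} {h₁ h₂ : X → ℝ}
    {p₀ : X} :
    ltComponent Q h₁ h₂ p₀ ⊆ {p | p ∈ Q ∧ h₂ p < h₁ p} :=
  connectedComponentIn_subset _ _

variable {E : Type*} [NormedAddCommGroup E] [NormedSpace ℝ E] {Q : Set E} {h₁ h₂ : E → ℝ}
  {p₀ q : E}

lemma ltComponent_mem_nhdsWithin (hQ : Convex ℝ Q) (hc₁ : ContinuousOn h₁ Q)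
    (hc₂ : ContinuousOn h₂ Q) (hq : q ∈ Q) (hlt : h₂ q < h₁ q)
    (hcl : q ∈ closure (ltComponent Q h₁ h₂ p₀)) :
    ltComponent Q h₁ h₂ p₀ ∈ 𝓝[Q] q :=
  connectedComponentIn_mem_nhdsWithin_of_mem_closure hQ (fun _ hp => hp.1)
    (Filter.Eventually.and self_mem_nhdsWithin ((hc₂ q hq).eventually_lt (hc₁ q hq) hlt)) hcl

lemma mem_ltComponent_of_mem_closure (hQ : Convex ℝ Q) (hQc : IsClosed Q)
    (hc₁ : ContinuousOn h₁ Q) (hc₂ : ContinuousOn h₂ Q)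
    (hcl : q ∈ closure (ltComponent Q h₁ h₂ p₀)) (hne : h₁ q ≠ h₂ q) :
    q ∈ ltComponent Q h₁ h₂ p₀ := by
  have hCQ : ltComponent Q h₁ h₂ p₀ ⊆ Q := fun p hp => (ltComponent_subset hp).1
  have hq : q ∈ Q := closure_minimal hCQ hQc hcl
  have hle : h₂ q ≤ h₁ q := ((hc₂ q hq).mono hCQ).closure_le hcl ((hc₁ q hq).mono hCQ)
    fun p hp => (ltComponent_subset hp).2.le
  exact mem_of_mem_nhdsWithin hq
    (ltComponent_mem_nhdsWithin hQ hc₁ hc₂ hq (hle.lt_of_ne hne.symm) hcl)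

lemma exists_mem_ltComponent_isMaxOn_mul (hQ : IsCompact Q) (hQc : Convex ℝ Q)
    (hc₁ : ContinuousOn h₁ Q) (hc₂ : ContinuousOn h₂ Q) (hp₀ : p₀ ∈ Q) (hlt : h₂ p₀ < h₁ p₀)
    {ρ : E → ℝ} (hρ : ContinuousOn ρ Q) (hρpos : ∀ p ∈ Q, 0 < ρ p) :
    ∃ q ∈ ltComponent Q h₁ h₂ p₀,
      IsMaxOn (fun p => (h₁ p - h₂ p) * ρ p) (ltComponent Q h₁ h₂ p₀) q := by
  have hCQ : closure (ltComponent Q h₁ h₂ p₀) ⊆ Q :=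
    closure_minimal (fun p hp => (ltComponent_subset hp).1) hQ.isClosed
  have hp₀C : p₀ ∈ ltComponent Q h₁ h₂ p₀ := mem_connectedComponentIn ⟨hp₀, hlt⟩
  obtain ⟨q, hq, hmax⟩ := (hQ.of_isClosed_subset isClosed_closure hCQ).exists_isMaxOn
    ⟨p₀, subset_closure hp₀C⟩ (((hc₁.sub hc₂).mul hρ).mono hCQ)
  have hpos : 0 < (h₁ q - h₂ q) * ρ q :=
    (mul_pos (sub_pos.mpr hlt) (hρpos p₀ hp₀)).trans_le (hmax (subset_closure hp₀C))
  have hne : h₁ q ≠ h₂ q := fun h => by simp [h] at hpos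
  exact ⟨q, mem_ltComponent_of_mem_closure hQc hQ.isClosed hc₁ hc₂ hq hne,
    hmax.on_subset subset_closure⟩

end LtComponent

lemma exists_pos_forall_le_fst_of_ne_on_axis {Q : Set (ℝ × ℝ)} {h₁ h₂ : ℝ × ℝ → ℝ}
    {p₀ : ℝ × ℝ} (hQ : IsCompact Q) (hQc : Convex ℝ Q) (hc₁ : ContinuousOn h₁ Q)
    (hc₂ : ContinuousOn h₂ Q) (hfst : ∀ p ∈ ltComponent Q h₁ h₂ p₀, 0 < p.1)
    (haxis : ∀ p ∈ Q, p.1 = 0 → h₁ p ≠ h₂ p) :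
    ∃ δ > 0, ∀ p ∈ ltComponent Q h₁ h₂ p₀, δ ≤ p.1 := by
  have hCQ : closure (ltComponent Q h₁ h₂ p₀) ⊆ Q :=
    closure_minimal (fun p hp => (ltComponent_subset hp).1) hQ.isClosed
  have hpos : ∀ q ∈ closure (ltComponent Q h₁ h₂ p₀), 0 < q.1 := by
    intro q hq
    have h0 : 0 ≤ q.1 := continuousWithinAt_const.closure_le hq
      continuous_fst.continuousWithinAt fun p hp => (hfst p hp).le
    refine h0.lt_of_ne fun h => (hfst q ?_).ne' h.symm
    exact mem_ltComponent_of_mem_closure hQc hQ.isClosed hc₁ hc₂ hq (haxis q (hCQ hq) h.symm)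
  obtain ⟨δ, hδ, h⟩ := (hQ.of_isClosed_subset isClosed_closure hCQ).exists_forall_le'
    continuous_fst.continuousOn hpos
  exact ⟨δ, hδ, fun p hp => h p (subset_closure hp)⟩

lemma exists_pos_forall_abs_sub_lt_of_eq_on_axis {Q : Set (ℝ × ℝ)} {h : ℝ × ℝ → ℝ}
    (hQ : IsCompact Q) (hc : ContinuousOn h Q) {c ε : ℝ} (hε : 0 < ε)
    (haxis : ∀ p ∈ Q, (0, p.2) ∈ Q ∧ h (0, p.2) = c) :
    ∃ δ > 0, ∀ p ∈ Q, |p.1| < δ → |h p - c| < ε := by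
  obtain ⟨δ, hδ, hδε⟩ :=
    Metric.uniformContinuousOn_iff.mp (hQ.uniformContinuousOn_of_continuous hc) ε hε
  refine ⟨δ, hδ, fun p hp hp₁ => ?_⟩
  obtain ⟨hp₀, rfl⟩ := haxis p hp
  simpa [Real.dist_eq] using hδε p hp _ hp₀ (by simpa [Prod.dist_eq, Real.dist_eq] using hp₁)

lemma sin_two_mul_le_sin_two_mul {a b : ℝ} (m : ℤ) (ha : |a - m * π| ≤ π / 4)
    (hb : |b - m * π| ≤ π / 4) (hba : b ≤ a) : sin (2 * b) ≤ sin (2 * a) := by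
  have hper : ∀ x : ℝ, sin (2 * x) = sin (2 * (x - m * π)) := fun x => by
    rw [show 2 * (x - m * π) = 2 * x - m * (2 * π) by ring, sin_sub_int_mul_two_pi]
  rw [hper a, hper b]
  rw [abs_le] at ha hb
  exact sin_le_sin_of_le_of_le_pi_div_two (by linarith) (by linarith) (by linarith)

lemma reaction_sub_le {K δ r a b : ℝ} (hδ : 0 < δ) (hba : b ≤ a)
    (h : δ ≤ r ∨ sin (2 * b) ≤ sin (2 * a)) :
    K ^ 2 * (sin (2 * b) - sin (2 * a)) / (2 * r ^ 2) ≤ K ^ 2 / δ ^ 2 * (a - b) := by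
  rcases h with hr | hsin
  · have hsin : sin (2 * b) - sin (2 * a) ≤ 2 * (a - b) := by
      have := Real.abs_sin_sub_sin_le (2 * b) (2 * a)
      rw [abs_of_nonpos (by linarith : 2 * b - 2 * a ≤ 0)] at this
      linarith [le_abs_self (sin (2 * b) - sin (2 * a))]
    calc K ^ 2 * (sin (2 * b) - sin (2 * a)) / (2 * r ^ 2)
        ≤ K ^ 2 * (2 * (a - b)) / (2 * r ^ 2) := by gcongr
      _ = K ^ 2 / r ^ 2 * (a - b) := by field_simp
      _ ≤ K ^ 2 / δ ^ 2 * (a - b) := by gcongr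
  · calc K ^ 2 * (sin (2 * b) - sin (2 * a)) / (2 * r ^ 2) ≤ 0 :=
          div_nonpos_of_nonpos_of_nonneg (mul_nonpos_of_nonneg_of_nonpos (sq_nonneg K)
            (by linarith)) (by positivity)
      _ ≤ K ^ 2 / δ ^ 2 * (a - b) := mul_nonneg (by positivity) (sub_nonneg.mpr hba)

theorem IsClassicalSol.mul_sub_le_of_isLocalMax_of_isLocalMaxOn {k : ℕ} {S : Set (ℝ × ℝ)}
    {h₁ h₂ : ℝ × ℝ → ℝ} (hs₁ : IsClassicalSol k S h₁) (hs₂ : IsClassicalSol k S h₂)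
    {p : ℝ × ℝ} (hp : S ∈ 𝓝 p) {L : ℝ}
    (hr : IsLocalMax (fun r => h₁ (r, p.2) - h₂ (r, p.2)) p.1)
    (ht : IsLocalMaxOn (fun t => (h₁ (p.1, t) - h₂ (p.1, t)) * exp (-L * t)) (Iic p.2) p.2) :
    L * (h₁ p - h₂ p) ≤ (k : ℝ) ^ 2 * (sin (2 * h₂ p) - sin (2 * h₁ p)) / (2 * p.1 ^ 2) := by
  have hpS := mem_of_mem_nhds hp
  have hderiv : ∀ᶠ r in 𝓝 p.1, HasDerivAt (fun x => h₁ (x, p.2) - h₂ (x, p.2))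
      (pdr h₁ (r, p.2) - pdr h₂ (r, p.2)) r := by
    filter_upwards [(continuous_id.prodMk continuous_const).tendsto' p.1 p rfl hp] with r hr
    exact (hs₁.1 _ hr).1.hasDerivAt.sub (hs₂.1 _ hr).1.hasDerivAt
  have hfirst : pdr h₁ p - pdr h₂ p = 0 := hr.hasDerivAt_eq_zero hderiv.self_of_nhds
  have hsecond : pdrr h₁ p - pdrr h₂ p ≤ 0 := hr.hasDerivAt_deriv_nonpos hderiv
    ((hs₁.1 p hpS).2.1.hasDerivAt.sub (hs₂.1 p hpS).2.1.hasDerivAt)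
  have htime : L * (h₁ p - h₂ p) ≤ pdt h₁ p - pdt h₂ p :=
    mul_le_of_isLocalMaxOn_mul_exp (g := fun t => h₁ (p.1, t) - h₂ (p.1, t)) ht
      ((hs₁.1 p hpS).2.2.hasDerivAt.sub (hs₂.1 p hpS).2.2.hasDerivAt)
  have hdrift : pdr h₁ p / p.1 - pdr h₂ p / p.1 = 0 := by rw [← sub_div, hfirst, zero_div]
  rw [hs₁.2.2.2.2 p hpS, hs₂.2.2.2.2 p hpS] at htime
  rw [mul_sub ((k : ℝ) ^ 2), sub_div]
  linarith

section Rectangle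

variable {R₁ R₂ t₁ t₂ : ℝ}

lemma mem_Ioo_prod_Ioc_of_notMem_parabolicBoundary {p : ℝ × ℝ}
    (hp : p ∈ Icc R₁ R₂ ×ˢ Icc t₁ t₂)
    (hb : p ∉ ({R₁} : Set ℝ) ×ˢ Icc t₁ t₂ ∪ ({R₂} : Set ℝ) ×ˢ Icc t₁ t₂ ∪ Icc R₁ R₂ ×ˢ {t₁}) :
    p ∈ Ioo R₁ R₂ ×ˢ Ioc t₁ t₂ := by
  obtain ⟨⟨hr₁, hr₂⟩, ht₁, ht₂⟩ := hp
  simp only [mem_union, mem_prod, mem_singleton_iff, not_or, not_and] at hb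
  exact ⟨⟨hr₁.lt_of_ne (fun h => hb.1.1 h.symm ⟨ht₁, ht₂⟩),
    hr₂.lt_of_ne (fun h => hb.1.2 h ⟨ht₁, ht₂⟩)⟩,
    ht₁.lt_of_ne (fun h => hb.2 ⟨hr₁, hr₂⟩ h.symm), ht₂⟩

lemma isLocalMax_and_isLocalMaxOn_of_isMaxOn {φ : ℝ × ℝ → ℝ} {C : Set (ℝ × ℝ)} {q : ℝ × ℝ}
    (hmax : IsMaxOn φ C q) (hC : C ∈ 𝓝[Icc R₁ R₂ ×ˢ Icc t₁ t₂] q)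
    (hq : q ∈ Ioo R₁ R₂ ×ˢ Ioc t₁ t₂) :
    IsLocalMax (fun r => φ (r, q.2)) q.1 ∧ IsLocalMaxOn (fun t => φ (q.1, t)) (Iic q.2) q.2 := by
  have hle : {p | φ p ≤ φ q} ∈ 𝓝[Icc R₁ R₂ ×ˢ Icc t₁ t₂] q := mem_of_superset hC hmax
  constructor
  · refine (tendsto_nhdsWithin_iff.mpr ⟨?_, ?_⟩).eventually hle
    · exact (continuous_id.prodMk continuous_const).tendsto' q.1 q rfl
    · filter_upwards [Ioo_mem_nhds hq.1.1 hq.1.2] with r hr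
      exact ⟨Ioo_subset_Icc_self hr, Ioc_subset_Icc_self hq.2⟩
  · refine (tendsto_nhdsWithin_iff.mpr ⟨?_, ?_⟩).eventually hle
    · exact ((continuous_const.prodMk continuous_id).tendsto' q.2 q rfl).mono_left
        nhdsWithin_le_nhds
    · filter_upwards [Ioc_mem_nhdsLE hq.2.1] with t ht
      exact ⟨Ioo_subset_Icc_self hq.1, ht.1.le, ht.2.trans hq.2.2⟩

lemma exists_mem_ltComponent_isLocalMax_and_isLocalMaxOn {h₁ h₂ : ℝ × ℝ → ℝ} {p₀ : ℝ × ℝ}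
    (hc₁ : ContinuousOn h₁ (Icc R₁ R₂ ×ˢ Icc t₁ t₂))
    (hc₂ : ContinuousOn h₂ (Icc R₁ R₂ ×ˢ Icc t₁ t₂))
    (hp₀ : p₀ ∈ {p | p ∈ Icc R₁ R₂ ×ˢ Icc t₁ t₂ ∧ h₂ p < h₁ p})
    (hint : ∀ p ∈ ltComponent (Icc R₁ R₂ ×ˢ Icc t₁ t₂) h₁ h₂ p₀, p ∈ Ioo R₁ R₂ ×ˢ Ioc t₁ t₂)
    (L : ℝ) :
    ∃ q ∈ ltComponent (Icc R₁ R₂ ×ˢ Icc t₁ t₂) h₁ h₂ p₀,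
      IsLocalMax (fun r => h₁ (r, q.2) - h₂ (r, q.2)) q.1 ∧
      IsLocalMaxOn (fun t => (h₁ (q.1, t) - h₂ (q.1, t)) * exp (-L * t)) (Iic q.2) q.2 := by
  have hQc : Convex ℝ (Icc R₁ R₂ ×ˢ Icc t₁ t₂) := (convex_Icc _ _).prod (convex_Icc _ _)
  obtain ⟨q, hq, hmax⟩ := exists_mem_ltComponent_isMaxOn_mul (isCompact_Icc.prod isCompact_Icc)
    hQc hc₁ hc₂ hp₀.1 hp₀.2 (ρ := fun p => exp (-L * p.2)) (by fun_prop) fun _ _ => exp_pos _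
  obtain ⟨hr, ht⟩ := isLocalMax_and_isLocalMaxOn_of_isMaxOn hmax
    (ltComponent_mem_nhdsWithin hQc hc₁ hc₂ (ltComponent_subset hq).1 (ltComponent_subset hq).2
      (subset_closure hq)) (hint q hq)
  exact ⟨q, hq, hr.mono fun r h => le_of_mul_le_mul_right h (exp_pos _), ht⟩

lemma Icc_prod_Icc_subset_heatFlowDomain {T : EReal} (hR₁ : 0 ≤ R₁) (hR₂ : R₂ ≤ 1)
    (ht₁ : 0 ≤ t₁) (ht₂ : (t₂ : EReal) < T) :
    Icc R₁ R₂ ×ˢ Icc t₁ t₂ ⊆ {p : ℝ × ℝ | p.1 ∈ Icc (0:ℝ) 1 ∧ 0 ≤ p.2 ∧ (p.2 : EReal) < T} :=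
  fun _ hp => ⟨⟨hR₁.trans hp.1.1, hp.1.2.trans hR₂⟩, ht₁.trans hp.2.1,
    (EReal.coe_le_coe_iff.mpr hp.2.2).trans_lt ht₂⟩

lemma Ioo_prod_Ioc_mem_nhds_heatFlowInterior {T : EReal} (hR₁ : 0 ≤ R₁) (hR₂ : R₂ ≤ 1)
    (ht₁ : 0 ≤ t₁) (ht₂ : (t₂ : EReal) < T) {q : ℝ × ℝ} (hq : q ∈ Ioo R₁ R₂ ×ˢ Ioc t₁ t₂) :
    {p : ℝ × ℝ | p.1 ∈ Ioo (0:ℝ) 1 ∧ 0 < p.2 ∧ (p.2 : EReal) < T} ∈ 𝓝 q := by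
  refine IsOpen.mem_nhds ?_ ⟨⟨hR₁.trans_lt hq.1.1, hq.1.2.trans_le hR₂⟩, ht₁.trans_lt hq.2.1,
    (EReal.coe_le_coe_iff.mpr hq.2.2).trans_lt ht₂⟩
  exact (isOpen_Ioo.preimage continuous_fst).inter ((isOpen_Ioi.preimage continuous_snd).inter
    (isOpen_Iio.preimage (continuous_coe_real_ereal.comp continuous_snd)))

lemma exists_pos_forall_le_fst_or_sin_le {h₁ h₂ : ℝ × ℝ → ℝ} {p₀ : ℝ × ℝ} (hR₁ : 0 ≤ R₁)
    (hc₁ : ContinuousOn h₁ (Icc R₁ R₂ ×ˢ Icc t₁ t₂))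
    (hc₂ : ContinuousOn h₂ (Icc R₁ R₂ ×ˢ Icc t₁ t₂))
    (hint : ∀ p ∈ ltComponent (Icc R₁ R₂ ×ˢ Icc t₁ t₂) h₁ h₂ p₀, R₁ < p.1)
    (haxis : R₁ = 0 → (∀ t ∈ Icc t₁ t₂, h₁ (0, t) ≠ h₂ (0, t)) ∨
      ∃ m : ℤ, ∀ t ∈ Icc t₁ t₂, h₁ (0, t) = m * π ∧ h₂ (0, t) = m * π) :
    ∃ δ > 0, ∀ p ∈ ltComponent (Icc R₁ R₂ ×ˢ Icc t₁ t₂) h₁ h₂ p₀,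
      δ ≤ p.1 ∨ sin (2 * h₂ p) ≤ sin (2 * h₁ p) := by
  have hQ : IsCompact (Icc R₁ R₂ ×ˢ Icc t₁ t₂) := isCompact_Icc.prod isCompact_Icc
  have hQc : Convex ℝ (Icc R₁ R₂ ×ˢ Icc t₁ t₂) := (convex_Icc _ _).prod (convex_Icc _ _)
  rcases hR₁.lt_or_eq with hR₁ | rfl
  · exact ⟨R₁, hR₁, fun p hp => Or.inl (hint p hp).le⟩
  rcases haxis rfl with hne | ⟨m, hm⟩
  · obtain ⟨δ, hδ, h⟩ := exists_pos_forall_le_fst_of_ne_on_axis hQ hQc hc₁ hc₂ hint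
      fun p hp h0 => by simpa [← h0] using hne p.2 hp.2
    exact ⟨δ, hδ, fun p hp => Or.inl (h p hp)⟩
  have hon : ∀ p ∈ Icc 0 R₂ ×ˢ Icc t₁ t₂, ((0 : ℝ), p.2) ∈ Icc 0 R₂ ×ˢ Icc t₁ t₂ :=
    fun p hp => ⟨⟨le_rfl, hp.1.1.trans hp.1.2⟩, hp.2⟩
  obtain ⟨δ₁, hδ₁, hnear₁⟩ := exists_pos_forall_abs_sub_lt_of_eq_on_axis hQ hc₁
    (by positivity : 0 < π / 4) fun p hp => ⟨hon p hp, (hm p.2 hp.2).1⟩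
  obtain ⟨δ₂, hδ₂, hnear₂⟩ := exists_pos_forall_abs_sub_lt_of_eq_on_axis hQ hc₂
    (by positivity : 0 < π / 4) fun p hp => ⟨hon p hp, (hm p.2 hp.2).2⟩
  refine ⟨min δ₁ δ₂, lt_min hδ₁ hδ₂, fun p hp => (le_or_gt (min δ₁ δ₂) p.1).imp_right ?_⟩
  intro hp₁
  obtain ⟨hpQ, hlt⟩ := ltComponent_subset hp
  rw [← abs_of_nonneg hpQ.1.1, lt_min_iff] at hp₁
  exact sin_two_mul_le_sin_two_mul m (hnear₁ p hpQ hp₁.1).le (hnear₂ p hpQ hp₁.2).le hlt.le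

end Rectangle

theorem component_of_h1_gt_h2_touches_parabolic_boundary_general
    (k : ℕ) (T : EReal)
    (h₁ h₂ : ℝ × ℝ → ℝ)
    (hc1 : ContinuousOn h₁ {p : ℝ × ℝ | p.1 ∈ Icc (0:ℝ) 1 ∧ 0 ≤ p.2 ∧ (p.2 : EReal) < T})
    (hc2 : ContinuousOn h₂ {p : ℝ × ℝ | p.1 ∈ Icc (0:ℝ) 1 ∧ 0 ≤ p.2 ∧ (p.2 : EReal) < T})
    (hs1 : IsClassicalSol k {p : ℝ × ℝ | p.1 ∈ Ioo (0:ℝ) 1 ∧ 0 < p.2 ∧ (p.2 : EReal) < T} h₁)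
    (hs2 : IsClassicalSol k {p : ℝ × ℝ | p.1 ∈ Ioo (0:ℝ) 1 ∧ 0 < p.2 ∧ (p.2 : EReal) < T} h₂)
    (t₁ t₂ : ℝ) (ht₁ : 0 ≤ t₁) (ht₂ : (t₂ : EReal) < T)
    (R₁ R₂ : ℝ) (hR₁ : 0 ≤ R₁) (hR₂ : R₂ ≤ 1)
    (hzero : R₁ = 0 →
      (∀ t : ℝ, 0 ≤ t → (t : EReal) < T → h₁ (0, t) ≠ h₂ (0, t)) ∨
      ∃ m : ℤ, ∀ t : ℝ, 0 ≤ t → (t : EReal) < T →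
        h₁ (0, t) = (m : ℝ) * π ∧ h₂ (0, t) = (m : ℝ) * π)
    (A : Set (ℝ × ℝ)) (p₀ : ℝ × ℝ)
    (hp₀ : p₀ ∈ {p : ℝ × ℝ | p ∈ Icc R₁ R₂ ×ˢ Icc t₁ t₂ ∧ h₂ p < h₁ p})
    (hA : A = connectedComponentIn
      {p : ℝ × ℝ | p ∈ Icc R₁ R₂ ×ˢ Icc t₁ t₂ ∧ h₂ p < h₁ p} p₀) :
    (A ∩ ((({R₁} : Set ℝ) ×ˢ Icc t₁ t₂) ∪ (({R₂} : Set ℝ) ×ˢ Icc t₁ t₂)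
        ∪ (Icc R₁ R₂ ×ˢ ({t₁} : Set ℝ)))).Nonempty := by
  subst hA
  by_contra hbdry
  have hQ := Icc_prod_Icc_subset_heatFlowDomain hR₁ hR₂ ht₁ ht₂
  have hint : ∀ p ∈ ltComponent (Icc R₁ R₂ ×ˢ Icc t₁ t₂) h₁ h₂ p₀,
      p ∈ Ioo R₁ R₂ ×ˢ Ioc t₁ t₂ :=
    fun p hp => mem_Ioo_prod_Ioc_of_notMem_parabolicBoundary (ltComponent_subset hp).1
      fun hb => hbdry ⟨p, hp, hb⟩
  have htime : ∀ t ∈ Icc t₁ t₂, 0 ≤ t ∧ (t : EReal) < T :=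
    fun t ht => ⟨ht₁.trans ht.1, (EReal.coe_le_coe_iff.mpr ht.2).trans_lt ht₂⟩
  obtain ⟨δ, hδ, hnear⟩ := exists_pos_forall_le_fst_or_sin_le hR₁ (hc1.mono hQ) (hc2.mono hQ)
    (fun p hp => (hint p hp).1.1) fun h0 => (hzero h0).imp
      (fun hne t ht => hne t (htime t ht).1 (htime t ht).2)
      fun ⟨m, hm⟩ => ⟨m, fun t ht => hm t (htime t ht).1 (htime t ht).2⟩
  obtain ⟨q, hq, hr, ht⟩ := exists_mem_ltComponent_isLocalMax_and_isLocalMaxOn (hc1.mono hQ)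
    (hc2.mono hQ) hp₀ hint ((k : ℝ) ^ 2 / δ ^ 2 + 1)
  have hpde := hs1.mul_sub_le_of_isLocalMax_of_isLocalMaxOn hs2
    (Ioo_prod_Ioc_mem_nhds_heatFlowInterior hR₁ hR₂ ht₁ ht₂ (hint q hq)) hr ht
  have hreact := reaction_sub_le (K := k) (r := q.1) hδ (ltComponent_subset hq).2.le (hnear q hq)
  linarith [(ltComponent_subset hq).2]

/-- Paper's Lemma 6.1: every connected component of `{h₁ > h₂}` inside the rectangle
`[R₁,R₂] × [t₁,t₂]` reaches the lateral or the initial part of the parabolic boundary. -/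
theorem component_of_h1_gt_h2_touches_parabolic_boundary
    (k : ℕ) (hk : 1 ≤ k) (T : EReal) (hT : 0 < T)
    (h₁ h₂ : ℝ × ℝ → ℝ)
    (hc1 : ContinuousOn h₁ {p : ℝ × ℝ | p.1 ∈ Icc (0:ℝ) 1 ∧ 0 ≤ p.2 ∧ (p.2 : EReal) < T})
    (hc2 : ContinuousOn h₂ {p : ℝ × ℝ | p.1 ∈ Icc (0:ℝ) 1 ∧ 0 ≤ p.2 ∧ (p.2 : EReal) < T})
    (hs1 : IsClassicalSol k {p : ℝ × ℝ | p.1 ∈ Ioo (0:ℝ) 1 ∧ 0 < p.2 ∧ (p.2 : EReal) < T} h₁)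
    (hs2 : IsClassicalSol k {p : ℝ × ℝ | p.1 ∈ Ioo (0:ℝ) 1 ∧ 0 < p.2 ∧ (p.2 : EReal) < T} h₂)
    (t₁ t₂ : ℝ) (ht₁ : 0 ≤ t₁) (ht12 : t₁ < t₂) (ht₂ : (t₂ : EReal) < T)
    (R₁ R₂ : ℝ) (hR₁ : 0 ≤ R₁) (hR12 : R₁ < R₂) (hR₂ : R₂ ≤ 1)
    (hzero : R₁ = 0 →
      (∀ t : ℝ, 0 ≤ t → (t : EReal) < T → h₁ (0, t) ≠ h₂ (0, t)) ∨
      ∃ m : ℤ, ∀ t : ℝ, 0 ≤ t → (t : EReal) < T →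
        h₁ (0, t) = (m : ℝ) * π ∧ h₂ (0, t) = (m : ℝ) * π)
    (A : Set (ℝ × ℝ)) (p₀ : ℝ × ℝ)
    (hp₀ : p₀ ∈ {p : ℝ × ℝ | p ∈ Icc R₁ R₂ ×ˢ Icc t₁ t₂ ∧ h₂ p < h₁ p})
    (hA : A = connectedComponentIn
      {p : ℝ × ℝ | p ∈ Icc R₁ R₂ ×ˢ Icc t₁ t₂ ∧ h₂ p < h₁ p} p₀) :
    (A ∩ ((({R₁} : Set ℝ) ×ˢ Icc t₁ t₂) ∪ (({R₂} : Set ℝ) ×ˢ Icc t₁ t₂)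
        ∪ (Icc R₁ R₂ ×ˢ ({t₁} : Set ℝ)))).Nonempty :=
  component_of_h1_gt_h2_touches_parabolic_boundary_general k T h₁ h₂ hc1 hc2 hs1 hs2 t₁ t₂ ht₁ ht₂
    R₁ R₂ hR₁ hR₂ hzero A p₀ hp₀ hA
end

section
/- Let k ≥ 1 be an integer, 0 < T ≤ ∞, 0 ≤ t₁ < t₂ < T and 0 < R ≤ 1. Let h, h₁, h₂ : [0,1] × [0,T) → ℝ be continuous functions which on (0,1) × (0,T) have continuous partial derivatives ∂_t, ∂_r, ∂_r² satisfying ∂_t u = ∂_r² u + ∂_r u/r − k²·sin(2u)/(2r²). Assume for each i ∈ {1,2}: either h(0,t) ≠ h_i(0,t) for every t ∈ [0,T), or there is m_i ∈ ℤ with h(0,t) = h_i(0,t) = m_i·π for every t ∈ [0,T). Let Γ be a nonempty connected component of {(r,t) ∈ [0,R] × [t₁,t₂] : h₁(r,t) < h(r,t) < h₂(r,t)} and suppose there exists C ∈ ℝ with sup over closure(Γ) of h₁ < C < inf over closure(Γ) of h₂. Then Γ intersects ({0} × [t₁,t₂]) ∪ ({R} × [t₁,t₂]) ∪ ([0,R]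 × {t₁}). -/
open Real Set

/-!
Suppose `Γ` misses the parabolic boundary. Let `z` be a lowest point of `closure Γ` where `h = C`
(any point of `Γ` if there is none) and take `g ∈ Γ` strictly below `z`, say with `h g < C`.
On the open set `G` of points of `Γ` below `z` where `h < C` we have `h > h₁`, while on the
frontier of `G` below `z` we have `h = h₁`: such a point lies on `∂Γ` (since `h ≠ C` there), where
`h = h₁` or `h = h₂`, and `h ≤ C < h₂`. The weak maximum principle then gives `h ≤ h₁` at `g`.
It is run on `e^{-ct} (h - h₁)`: at a positive interior maximum, `∂ᵣ` vanishes, `∂ᵣ²` is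
nonpositive and `∂ₜ` is at least `c (h - h₁)`, so the equation leaves only the reaction term
`k² (sin 2h₁ - sin 2h) / (2r²)`. Away from the axis it is at most `k² (h - h₁) / a²` because `sin`
is 1-Lipschitz; near the axis both functions are close to the same multiple of `π`, where
`x ↦ sin 2x` is increasing, so it is nonpositive. Choosing `c = k² / a² + 1` gives a
contradiction. The case `h g > C` is symmetric, comparing `h₂` with `h`.
-/

open Filter Topology

theorem IsLocalMax.deriv_deriv_nonpos {f : ℝ → ℝ} {a : ℝ} (h : IsLocalMax f a)
    (hf : ContinuousAt f a) : deriv (deriv f) a ≤ 0 := by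
  by_contra! hpos
  have hconst : f =ᶠ[𝓝 a] fun _ => f a :=
    ((isLocalMin_of_deriv_deriv_pos hpos h.deriv_eq_zero hf).and h).mono
      fun x hx => le_antisymm hx.2 hx.1
  rw [hconst.deriv.deriv_eq] at hpos
  simp at hpos

theorem HasDerivAt.nonneg_of_eventually_le_left {g : ℝ → ℝ} {g' t : ℝ}
    (hg : HasDerivAt g g' t) (hmax : ∀ᶠ s in 𝓝[<] t, g s ≤ g t) : 0 ≤ g' := by
  have hslope := hasDerivWithinAt_iff_tendsto_slope.1 (hg.hasDerivWithinAt (s := Iio t))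
  rw [sdiff_singleton_eq_self (self_notMem_Iio (a := t))] at hslope
  refine ge_of_tendsto hslope ((hmax.and self_mem_nhdsWithin).mono fun s ⟨hs, hst⟩ => ?_)
  rw [slope_def_field]
  exact div_nonneg_of_nonpos (sub_nonpos.2 hs) (sub_nonpos.2 (le_of_lt hst))

section OpenSets

variable {X Y : Type*} [TopologicalSpace X] [TopologicalSpace Y] {G : Set (X × Y)} {q : X × Y}

theorem IsOpen.eventually_prodMk_left_mem (hG : IsOpen G) (hq : q ∈ G) :
    ∀ᶠ x in 𝓝 q.1, (x, q.2) ∈ G :=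
  (continuous_id.prodMk continuous_const).continuousAt.preimage_mem_nhds (hG.mem_nhds hq)

theorem IsOpen.eventually_prodMk_right_mem (hG : IsOpen G) (hq : q ∈ G) :
    ∀ᶠ y in 𝓝 q.2, (q.1, y) ∈ G :=
  (continuous_const.prodMk continuous_id).continuousAt.preimage_mem_nhds (hG.mem_nhds hq)

end OpenSets

theorem sin_two_mul_le_sin_two_mul_s7 {u w : ℝ} {m : ℤ} (hu : |u - m * π| < π / 4)
    (hw : |w - m * π| < π / 4) (hwu : w ≤ u) : sin (2 * w) ≤ sin (2 * u) := by
  have hshift : ∀ x, sin (2 * x) = sin (2 * (x - m * π)) := fun x => by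
    rw [← sin_add_int_mul_two_pi (2 * (x - m * π)) m]; ring_nf
  rw [hshift u, hshift w]
  obtain ⟨hu₁, hu₂⟩ := abs_lt.1 hu
  obtain ⟨hw₁, hw₂⟩ := abs_lt.1 hw
  exact strictMonoOn_sin.monotoneOn ⟨by linarith, by linarith⟩ ⟨by linarith, by linarith⟩
    (by linarith)

theorem sq_mul_sin_sub_sin_div_lt {k : ℕ} {a r u w : ℝ} (ha : 0 < a) (hwu : w < u)
    (h : a ≤ |r| ∨ sin (2 * w) ≤ sin (2 * u)) :
    k ^ 2 * (sin (2 * w) - sin (2 * u)) / (2 * r ^ 2) < (k ^ 2 / a ^ 2 + 1) * (u - w) := by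
  rcases h with har | hsin
  · have hr2 : a ^ 2 ≤ r ^ 2 := sq_le_sq.2 (by rwa [abs_of_pos ha])
    have hsin : sin (2 * w) - sin (2 * u) ≤ 2 * (u - w) :=
      (le_abs_self _).trans ((abs_sin_sub_sin_le _ _).trans_eq (by
        rw [abs_of_neg (by linarith)]; ring))
    calc k ^ 2 * (sin (2 * w) - sin (2 * u)) / (2 * r ^ 2)
        ≤ k ^ 2 * (2 * (u - w)) / (2 * r ^ 2) := by gcongr
      _ = k ^ 2 / r ^ 2 * (u - w) := by field_simp
      _ ≤ k ^ 2 / a ^ 2 * (u - w) := by gcongr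
      _ < (k ^ 2 / a ^ 2 + 1) * (u - w) := by linarith
  · calc k ^ 2 * (sin (2 * w) - sin (2 * u)) / (2 * r ^ 2) ≤ 0 :=
          div_nonpos_of_nonpos_of_nonneg
            (mul_nonpos_of_nonneg_of_nonpos (by positivity) (by linarith)) (by positivity)
      _ < (k ^ 2 / a ^ 2 + 1) * (u - w) := by have := sub_pos.2 hwu; positivity

theorem IsCompact.exists_pos_le_abs_fst {K : Set (ℝ × ℝ)} (hK : IsCompact K)
    (hK0 : ∀ q ∈ K, q.1 ≠ 0) : ∃ a > 0, ∀ q ∈ K, a ≤ |q.1| := by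
  rcases K.eq_empty_or_nonempty with rfl | hne
  · exact ⟨1, one_pos, fun q hq => hq.elim⟩
  obtain ⟨q₀, hq₀, hmin⟩ := hK.exists_isMinOn hne continuous_fst.abs.continuousOn
  exact ⟨|q₀.1|, abs_pos.2 (hK0 q₀ hq₀), fun q hq => hmin hq⟩

theorem IsCompact.exists_pos_abs_sub_lt_of_abs_fst_lt {K : Set (ℝ × ℝ)} {f : ℝ × ℝ → ℝ}
    {c ε : ℝ} (hK : IsCompact K) (hf : ContinuousOn f K) (hε : 0 < ε)
    (h0 : ∀ q ∈ K, q.1 = 0 → f q = c) :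
    ∃ a > 0, ∀ q ∈ K, |q.1| < a → |f q - c| < ε := by
  have hfar : IsCompact (K ∩ f ⁻¹' (Metric.ball c ε)ᶜ) :=
    hK.of_isClosed_subset (hf.preimage_isClosed_of_isClosed hK.isClosed
      Metric.isOpen_ball.isClosed_compl) inter_subset_left
  obtain ⟨a, ha, hle⟩ := hfar.exists_pos_le_abs_fst fun q hq hq0 =>
    hq.2 (by simpa [h0 q hq.1 hq0] using hε)
  refine ⟨a, ha, fun q hq hqa => ?_⟩
  by_contra hfq
  exact (hle q ⟨hq, by simpa [Real.dist_eq] using hfq⟩).not_gt hqa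

theorem exists_pos_forall_sin_two_mul_le {K : Set (ℝ × ℝ)} {u w : ℝ × ℝ → ℝ} {m : ℤ}
    (hK : IsCompact K) (hu : ContinuousOn u K) (hw : ContinuousOn w K)
    (h0 : ∀ q ∈ K, q.1 = 0 → u q = m * π ∧ w q = m * π) :
    ∃ a > 0, ∀ q ∈ K, w q ≤ u q → a ≤ |q.1| ∨ sin (2 * w q) ≤ sin (2 * u q) := by
  have hπ : 0 < π / 4 := by positivity
  obtain ⟨a, ha, hua⟩ :=
    hK.exists_pos_abs_sub_lt_of_abs_fst_lt hu hπ fun q hq hq0 => (h0 q hq hq0).1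
  obtain ⟨b, hb, hwb⟩ :=
    hK.exists_pos_abs_sub_lt_of_abs_fst_lt hw hπ fun q hq hq0 => (h0 q hq hq0).2
  refine ⟨min a b, lt_min ha hb, fun q hq hwu => or_iff_not_imp_left.2 fun hq1 => ?_⟩
  obtain ⟨hqa, hqb⟩ := lt_min_iff.1 (not_le.1 hq1)
  exact sin_two_mul_le_sin_two_mul_s7 (hua q hq hqa) (hwb q hq hqb) hwu

theorem exists_mem_forall_snd_lt_ne {Γ : Set (ℝ × ℝ)} {f : ℝ × ℝ → ℝ} {C : ℝ}
    (hne : Γ.Nonempty) (hK : IsCompact (closure Γ)) (hf : ContinuousOn f (closure Γ))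
    (hC : ∀ q ∈ closure Γ, f q = C → q ∈ Γ) :
    ∃ z ∈ Γ, ∀ q ∈ closure Γ, q.2 < z.2 → f q ≠ C := by
  set Z := closure Γ ∩ f ⁻¹' {C}
  rcases Z.eq_empty_or_nonempty with hZ | hZ
  · obtain ⟨p, hp⟩ := hne
    exact ⟨p, hp, fun q hq _ hqC => eq_empty_iff_forall_notMem.1 hZ q ⟨hq, hqC⟩⟩
  have hZc : IsCompact Z := hK.of_isClosed_subset
    (hf.preimage_isClosed_of_isClosed isClosed_closure isClosed_singleton) inter_subset_left
  obtain ⟨z, hz, hmin⟩ := hZc.exists_isMinOn hZ continuous_snd.continuousOn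
  exact ⟨z, hC z hz.1 hz.2, fun q hq hqz hqC => (hmin ⟨hq, hqC⟩).not_gt hqz⟩

theorem mem_nhdsWithin_setOf_lt_lt {X : Type*} [TopologicalSpace X] {B : Set X}
    {h h₁ h₂ : X → ℝ} (hc : ContinuousOn h B) (hc₁ : ContinuousOn h₁ B)
    (hc₂ : ContinuousOn h₂ B) {q : X}
    (hq : q ∈ {p | p ∈ B ∧ h₁ p < h p ∧ h p < h₂ p}) :
    {p | p ∈ B ∧ h₁ p < h p ∧ h p < h₂ p} ∈ 𝓝[B] q := by
  filter_upwards [self_mem_nhdsWithin, (hc₁ q hq.1).eventually_lt (hc q hq.1) hq.2.1,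
    (hc q hq.1).eventually_lt (hc₂ q hq.1) hq.2.2] with p hB h₁ h₂ using ⟨hB, h₁, h₂⟩

section Components

variable {E : Type*} [NormedAddCommGroup E] [NormedSpace ℝ E] {B S : Set E} {x q : E}

theorem connectedComponentIn_mem_nhdsWithin (hB : Convex ℝ B) (hSB : S ⊆ B)
    (hq : q ∈ connectedComponentIn S x) (hS : S ∈ 𝓝[B] q) :
    connectedComponentIn S x ∈ 𝓝[B] q := by
  obtain ⟨ε, hε, hsub⟩ := Metric.mem_nhdsWithin_iff.1 hS
  have hqB : q ∈ B := hSB (connectedComponentIn_subset _ _ hq)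
  rw [connectedComponentIn_eq hq]
  exact Metric.mem_nhdsWithin_iff.2 ⟨ε, hε, ((convex_ball q ε).inter hB).isPreconnected
    |>.subset_connectedComponentIn ⟨Metric.mem_ball_self hε, hqB⟩ hsub⟩

theorem mem_connectedComponentIn_of_mem_closure (hB : Convex ℝ B) (hSB : S ⊆ B)
    (hq : q ∈ closure (connectedComponentIn S x)) (hqS : q ∈ S) (hS : S ∈ 𝓝[B] q) :
    q ∈ connectedComponentIn S x := by
  obtain ⟨U, hU, hUB⟩ := mem_nhdsWithin_iff_exists_mem_nhds_inter.1 <|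
    connectedComponentIn_mem_nhdsWithin hB hSB (mem_connectedComponentIn hqS) hS
  obtain ⟨y, hyU, hyx⟩ := mem_closure_iff_nhds.1 hq U hU
  have hyq : y ∈ connectedComponentIn S q :=
    hUB ⟨hyU, hSB (connectedComponentIn_subset _ _ hyx)⟩
  rw [connectedComponentIn_eq hyx, ← connectedComponentIn_eq hyq]
  exact mem_connectedComponentIn hqS

theorem eq_or_eq_of_mem_closure_connectedComponentIn (hB : Convex ℝ B) (hBc : IsClosed B)
    {h h₁ h₂ : E → ℝ} (hc : ContinuousOn h B) (hc₁ : ContinuousOn h₁ B)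
    (hc₂ : ContinuousOn h₂ B)
    (hq : q ∈ closure (connectedComponentIn {p | p ∈ B ∧ h₁ p < h p ∧ h p < h₂ p} x))
    (hqΓ : q ∉ connectedComponentIn {p | p ∈ B ∧ h₁ p < h p ∧ h p < h₂ p} x) :
    h q = h₁ q ∨ h q = h₂ q := by
  have hΓS := connectedComponentIn_subset {p | p ∈ B ∧ h₁ p < h p ∧ h p < h₂ p} x
  have hΓB : connectedComponentIn _ x ⊆ B := fun p hp => (hΓS hp).1
  have hqB : q ∈ B := closure_minimal hΓB hBc hq
  have hle₁ : h₁ q ≤ h q := ((hc₁ q hqB).mono hΓB).closure_le hq ((hc q hqB).mono hΓB)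
    fun p hp => le_of_lt (hΓS hp).2.1
  have hle₂ : h q ≤ h₂ q := ((hc q hqB).mono hΓB).closure_le hq ((hc₂ q hqB).mono hΓB)
    fun p hp => le_of_lt (hΓS hp).2.2
  by_contra! hne
  have hqS : q ∈ {p | p ∈ B ∧ h₁ p < h p ∧ h p < h₂ p} :=
    ⟨hqB, hle₁.lt_of_ne hne.1.symm, hle₂.lt_of_ne hne.2⟩
  exact hqΓ (mem_connectedComponentIn_of_mem_closure hB (fun p hp => hp.1) hq hqS
    (mem_nhdsWithin_setOf_lt_lt hc hc₁ hc₂ hqS))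

end Components

theorem exists_mem_snd_lt_of_mem_nhdsWithin {Γ : Set (ℝ × ℝ)} {a b c d : ℝ} {q : ℝ × ℝ}
    (hΓ : Γ ∈ 𝓝[Icc a b ×ˢ Icc c d] q) (hq : q ∈ Icc a b ×ˢ Icc c d) (hcq : c < q.2) :
    ∃ g ∈ Γ, g.2 < q.2 := by
  have hline : Tendsto (fun t => (q.1, t)) (𝓝[<] q.2) (𝓝[Icc a b ×ˢ Icc c d] q) := by
    refine tendsto_nhdsWithin_iff.2
      ⟨((continuous_const.prodMk continuous_id).tendsto q.2).mono_left nhdsWithin_le_nhds, ?_⟩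
    filter_upwards [Ioo_mem_nhdsLT hcq] with t ht using ⟨hq.1, ht.1.le, ht.2.le.trans hq.2.2⟩
  obtain ⟨t, ht, htq⟩ := ((hline.eventually hΓ).and self_mem_nhdsWithin).exists
  exact ⟨(q.1, t), ht, htq⟩

theorem mem_Ioo_prod_Ioc_of_notMem {R t₁ t₂ : ℝ} {p : ℝ × ℝ}
    (hp : p ∈ Icc 0 R ×ˢ Icc t₁ t₂)
    (hnot : p ∉ ({0} : Set ℝ) ×ˢ Icc t₁ t₂ ∪ ({R} : Set ℝ) ×ˢ Icc t₁ t₂ ∪ Icc 0 R ×ˢ {t₁}) :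
    p ∈ Ioo 0 R ×ˢ Ioc t₁ t₂ := by
  obtain ⟨⟨h0, hR⟩, ht, ht'⟩ := hp
  exact ⟨⟨h0.lt_of_ne fun e => hnot (.inl (.inl ⟨e.symm, ht, ht'⟩)),
    hR.lt_of_ne fun e => hnot (.inl (.inr ⟨e, ht, ht'⟩))⟩,
    ht.lt_of_ne fun e => hnot (.inr ⟨⟨h0, hR⟩, e.symm⟩), ht'⟩

namespace IsClassicalSol

theorem mono {k : ℕ} {S S' : Set (ℝ × ℝ)} {h : ℝ × ℝ → ℝ} (hS : IsClassicalSol k S h)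
    (hS' : S' ⊆ S) : IsClassicalSol k S' h :=
  ⟨fun p hp => hS.1 p (hS' hp), hS.2.1.mono hS', hS.2.2.1.mono hS', hS.2.2.2.1.mono hS',
    fun p hp => hS.2.2.2.2 p (hS' hp)⟩

variable {k : ℕ} {G : Set (ℝ × ℝ)} {u w : ℝ × ℝ → ℝ} {q : ℝ × ℝ}

theorem pdr_eq_and_pdrr_le_of_isLocalMax (hu : IsClassicalSol k G u)
    (hw : IsClassicalSol k G w) (hG : IsOpen G) (hq : q ∈ G)
    (hmax : IsLocalMax (fun r => u (r, q.2) - w (r, q.2)) q.1) :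
    pdr u q = pdr w q ∧ pdrr u q ≤ pdrr w q := by
  have hderiv : deriv (fun r => u (r, q.2) - w (r, q.2)) =ᶠ[𝓝 q.1]
      fun r => pdr u (r, q.2) - pdr w (r, q.2) :=
    (hG.eventually_prodMk_left_mem hq).mono fun r hr =>
      deriv_fun_sub (hu.1 _ hr).1 (hw.1 _ hr).1
  have hdr : pdr u q - pdr w q = 0 := hderiv.eq_of_nhds ▸ hmax.deriv_eq_zero
  have hdrr := hmax.deriv_deriv_nonpos
    ((hu.1 q hq).1.continuousAt.sub (hw.1 q hq).1.continuousAt)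
  rw [hderiv.deriv_eq, deriv_fun_sub (hu.1 q hq).2.1 (hw.1 q hq).2.1] at hdrr
  exact ⟨sub_eq_zero.1 hdr, sub_nonpos.1 hdrr⟩

theorem mul_sub_le_pdt_sub (hu : IsClassicalSol k G u) (hw : IsClassicalSol k G w)
    (hq : q ∈ G) {c : ℝ} (hmax : ∀ᶠ t in 𝓝[<] q.2,
      exp (-c * t) * (u (q.1, t) - w (q.1, t)) ≤ exp (-c * q.2) * (u q - w q)) :
    c * (u q - w q) ≤ pdt u q - pdt w q := by
  have hd := ((hasDerivAt_id' q.2).const_mul (-c)).exp.mul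
    ((hu.1 q hq).2.2.hasDerivAt.sub (hw.1 q hq).2.2.hasDerivAt)
  have := hd.nonneg_of_eventually_le_left hmax
  change 0 ≤ exp (-c * q.2) * (-c * 1) * (u q - w q) + exp (-c * q.2) * (pdt u q - pdt w q)
    at this
  rw [mul_one, mul_assoc, ← mul_add] at this
  have := nonneg_of_mul_nonneg_right this (exp_pos _)
  linarith

theorem mul_sub_le_of_isLocalMax (hu : IsClassicalSol k G u) (hw : IsClassicalSol k G w)
    (hG : IsOpen G) (hq : q ∈ G) (hr : IsLocalMax (fun r => u (r, q.2) - w (r, q.2)) q.1)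
    {c : ℝ} (ht : ∀ᶠ t in 𝓝[<] q.2,
      exp (-c * t) * (u (q.1, t) - w (q.1, t)) ≤ exp (-c * q.2) * (u q - w q)) :
    c * (u q - w q) ≤ k ^ 2 * (sin (2 * w q) - sin (2 * u q)) / (2 * q.1 ^ 2) := by
  obtain ⟨hdr, hdrr⟩ := hu.pdr_eq_and_pdrr_le_of_isLocalMax hw hG hq hr
  have hdt := hu.mul_sub_le_pdt_sub hw hq ht
  rw [hu.2.2.2.2 q hq, hw.2.2.2.2 q hq, hdr] at hdt
  have hsplit : (k : ℝ) ^ 2 * (sin (2 * w q) - sin (2 * u q)) / (2 * q.1 ^ 2) =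
      k ^ 2 * sin (2 * w q) / (2 * q.1 ^ 2) - k ^ 2 * sin (2 * u q) / (2 * q.1 ^ 2) := by
    ring
  linarith

theorem le_of_le_on_frontier (hu : IsClassicalSol k G u) (hw : IsClassicalSol k G w)
    (hG : IsOpen G) (hGc : IsCompact (closure G))
    (hc : ContinuousOn (fun p => u p - w p) (closure G)) {a : ℝ} (ha : 0 < a)
    (hsin : ∀ p ∈ G, w p < u p → a ≤ |p.1| ∨ sin (2 * w p) ≤ sin (2 * u p))
    {τ : ℝ} (hbd : ∀ q ∈ frontier G, q.2 ≤ τ → u q ≤ w q) {p : ℝ × ℝ} (hp : p ∈ G)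
    (hpτ : p.2 ≤ τ) : u p ≤ w p := by
  by_contra! hwu
  set c : ℝ := k ^ 2 / a ^ 2 + 1
  set φ : ℝ × ℝ → ℝ := fun q => exp (-c * q.2) * (u q - w q)
  set K := closure G ∩ {q | q.2 ≤ p.2}
  have hK : IsCompact K := hGc.inter_right (isClosed_le continuous_snd continuous_const)
  have hpK : p ∈ K := ⟨subset_closure hp, le_refl p.2⟩
  obtain ⟨q, hqK, hqmax⟩ := hK.exists_isMaxOn ⟨p, hpK⟩
    ((continuous_const.mul continuous_snd).rexp.continuousOn.mul (hc.mono inter_subset_left))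
  have hφq : 0 < φ q := (mul_pos (exp_pos _) (sub_pos.2 hwu)).trans_le (hqmax hpK)
  have hvq : w q < u q := sub_pos.1 (pos_of_mul_pos_right hφq (exp_pos _).le)
  have hqG : q ∈ G := by
    by_contra hqG
    have := hbd q ⟨hqK.1, by rwa [hG.interior_eq]⟩ (hqK.2.trans hpτ)
    linarith
  have hr : IsLocalMax (fun r => u (r, q.2) - w (r, q.2)) q.1 := by
    filter_upwards [hG.eventually_prodMk_left_mem hqG] with r hr
    exact le_of_mul_le_mul_left (hqmax ⟨subset_closure hr, hqK.2⟩) (exp_pos _)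
  have ht : ∀ᶠ t in 𝓝[<] q.2, φ (q.1, t) ≤ φ q := by
    filter_upwards [nhdsWithin_le_nhds (hG.eventually_prodMk_right_mem hqG),
      self_mem_nhdsWithin] with t ht hlt
    exact hqmax ⟨subset_closure ht, (le_of_lt (mem_Iio.1 hlt)).trans hqK.2⟩
  exact (hu.mul_sub_le_of_isLocalMax hw hG hqG hr ht).not_gt
    (sq_mul_sin_sub_sin_div_lt ha hvq (hsin q hqG hvq))

theorem le_of_neg_of_snd_lt {Γ : Set (ℝ × ℝ)} {ψ : ℝ × ℝ → ℝ} {τ : ℝ}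
    (hu : IsClassicalSol k Γ u) (hw : IsClassicalSol k Γ w) (hΓc : IsCompact (closure Γ))
    (hΓpos : ∀ q ∈ Γ, 0 < q.1) (hΓ : ∀ q ∈ Γ, q.2 < τ → Γ ∈ 𝓝 q)
    (hcu : ContinuousOn u (closure Γ)) (hcw : ContinuousOn w (closure Γ))
    (hcψ : ContinuousOn ψ (closure Γ)) (hψ : ∀ q ∈ closure Γ, q.2 < τ → ψ q ≠ 0)
    (hbd : ∀ q ∈ closure Γ \ Γ, ψ q ≤ 0 → u q = w q)
    (haxis : (∀ q ∈ closure Γ, q.1 = 0 → u q ≠ w q) ∨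
      ∃ m : ℤ, ∀ q ∈ closure Γ, q.1 = 0 → u q = m * π ∧ w q = m * π)
    {g : ℝ × ℝ} (hg : g ∈ Γ) (hgτ : g.2 < τ) (hgψ : ψ g < 0) : u g ≤ w g := by
  set G := {p | p ∈ Γ ∧ p.2 < τ ∧ ψ p < 0}
  have hGΓ : G ⊆ Γ := fun p hp => hp.1
  have hclG : closure G ⊆ closure Γ := closure_mono hGΓ
  have hGc : IsCompact (closure G) := hΓc.of_isClosed_subset isClosed_closure hclG
  have hG : IsOpen G := isOpen_iff_mem_nhds.2 fun p ⟨hpΓ, hpτ, hpψ⟩ => by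
    have hΓp := hΓ p hpΓ hpτ
    have hψp := ((hcψ p (subset_closure hpΓ)).continuousAt
      (mem_of_superset hΓp subset_closure)).eventually (eventually_lt_nhds hpψ)
    filter_upwards [hΓp, (isOpen_lt continuous_snd continuous_const).mem_nhds hpτ, hψp]
      with q h₁ h₂ h₃ using ⟨h₁, h₂, h₃⟩
  have hψG : ∀ q ∈ closure G, ψ q ≤ 0 := fun q hq =>
    ((hcψ q (hclG hq)).mono (subset_closure.trans hclG)).closure_le hq
      continuousWithinAt_const fun p hp => le_of_lt hp.2.2
  have hfr : ∀ q ∈ frontier G, q.2 ≤ g.2 → u q ≤ w q := by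
    intro q hq hqg
    rw [hG.frontier_eq] at hq
    have hqΓ : q ∉ Γ := fun hqΓ => hq.2 ⟨hqΓ, hqg.trans_lt hgτ,
      (hψG q hq.1).lt_of_ne (hψ q (hclG hq.1) (hqg.trans_lt hgτ))⟩
    exact (hbd q ⟨hclG hq.1, hqΓ⟩ (hψG q hq.1)).le
  obtain ⟨a, ha, hsin⟩ : ∃ a > 0, ∀ p ∈ closure G, w p ≤ u p →
      a ≤ |p.1| ∨ sin (2 * w p) ≤ sin (2 * u p) := by
    rcases haxis with hne | ⟨m, hm⟩
    · obtain ⟨a, ha, hle⟩ := hGc.exists_pos_le_abs_fst fun q hq hq0 => hne q (hclG hq) hq0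
        (hbd q ⟨hclG hq, fun hqΓ => (hΓpos q hqΓ).ne' hq0⟩ (hψG q hq))
      exact ⟨a, ha, fun p hp _ => .inl (hle p hp)⟩
    · exact exists_pos_forall_sin_two_mul_le hGc (hcu.mono hclG) (hcw.mono hclG)
        fun q hq => hm q (hclG hq)
  exact (hu.mono hGΓ).le_of_le_on_frontier (hw.mono hGΓ) hG hGc ((hcu.sub hcw).mono hclG) ha
    (fun p hp hwu => hsin p (subset_closure hp) hwu.le) hfr ⟨hg, hgτ, hgψ⟩ le_rfl

theorem eq_empty_of_subset_Ioo_prod_Ioc {R t₁ t₂ C : ℝ} {Γ : Set (ℝ × ℝ)}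
    {h h₁ h₂ : ℝ × ℝ → ℝ} (hs : IsClassicalSol k Γ h) (hs₁ : IsClassicalSol k Γ h₁)
    (hs₂ : IsClassicalSol k Γ h₂) (hc : ContinuousOn h (closure Γ))
    (hc₁ : ContinuousOn h₁ (closure Γ)) (hc₂ : ContinuousOn h₂ (closure Γ))
    (hΓh : ∀ q ∈ Γ, h₁ q < h q ∧ h q < h₂ q) (hΓ : Γ ⊆ Ioo 0 R ×ˢ Ioc t₁ t₂)
    (hΓB : ∀ q ∈ Γ, Γ ∈ 𝓝[Icc 0 R ×ˢ Icc t₁ t₂] q)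
    (hbd : ∀ q ∈ closure Γ \ Γ, h q = h₁ q ∨ h q = h₂ q)
    (hC : ∀ q ∈ closure Γ, h₁ q < C ∧ C < h₂ q)
    (hax₁ : (∀ q ∈ closure Γ, q.1 = 0 → h q ≠ h₁ q) ∨
      ∃ m : ℤ, ∀ q ∈ closure Γ, q.1 = 0 → h q = m * π ∧ h₁ q = m * π)
    (hax₂ : (∀ q ∈ closure Γ, q.1 = 0 → h₂ q ≠ h q) ∨
      ∃ m : ℤ, ∀ q ∈ closure Γ, q.1 = 0 → h₂ q = m * π ∧ h q = m * π) :
    Γ = ∅ := by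
  refine eq_empty_iff_forall_notMem.2 fun p₀ hp₀ => ?_
  have hΓB' : Γ ⊆ Icc 0 R ×ˢ Icc t₁ t₂ :=
    hΓ.trans (prod_mono Ioo_subset_Icc_self Ioc_subset_Icc_self)
  have hK : IsCompact (closure Γ) := (isCompact_Icc.prod isCompact_Icc).of_isClosed_subset
    isClosed_closure (closure_minimal hΓB' (isClosed_Icc.prod isClosed_Icc))
  obtain ⟨z, hzΓ, hz⟩ := exists_mem_forall_snd_lt_ne (C := C) ⟨p₀, hp₀⟩ hK hc
    fun q hq hqC => by
      by_contra hqΓ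
      obtain ⟨hC₁, hC₂⟩ := hC q hq
      rcases hbd q ⟨hq, hqΓ⟩ with e | e <;> linarith
  obtain ⟨g, hgΓ, hgz⟩ :=
    exists_mem_snd_lt_of_mem_nhdsWithin (hΓB z hzΓ) (hΓB' hzΓ) (hΓ hzΓ).2.1
  have hΓnhds : ∀ q ∈ Γ, q.2 < z.2 → Γ ∈ 𝓝 q := fun q hq hqz => by
    obtain ⟨⟨hq0, hqR⟩, hqt, -⟩ := hΓ hq
    have := hΓB q hq
    rwa [nhdsWithin_eq_nhds.2 (prod_mem_nhds (Icc_mem_nhds hq0 hqR)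
      (Icc_mem_nhds hqt (hqz.trans_le (hΓ hzΓ).2.2)))] at this
  have hΓpos : ∀ q ∈ Γ, 0 < q.1 := fun q hq => (hΓ hq).1.1
  -- Below `z` the level `C` is never reached, so the sign of `h - C` at `g` decides whether
  -- `h` is compared with the barrier `h₁` or with `h₂`.
  rcases (hz g (subset_closure hgΓ) hgz).lt_or_gt with hlt | hgt
  · refine (hΓh g hgΓ).1.not_ge (hs.le_of_neg_of_snd_lt (ψ := fun p => h p - C) hs₁ hK hΓpos
      hΓnhds hc hc₁ (hc.sub continuousOn_const) (fun q hq hqz => sub_ne_zero.2 (hz q hq hqz))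
      (fun q hq hqC => ?_) hax₁ hgΓ hgz (sub_neg.2 hlt))
    exact (hbd q hq).resolve_right fun e => by
      linarith [(hC q hq.1).2, show h q - C ≤ 0 from hqC]
  · refine (hΓh g hgΓ).2.not_ge (hs₂.le_of_neg_of_snd_lt (ψ := fun p => C - h p) hs hK hΓpos
      hΓnhds hc₂ hc (continuousOn_const.sub hc)
      (fun q hq hqz => sub_ne_zero.2 (hz q hq hqz).symm) (fun q hq hqC => ?_) hax₂ hgΓ hgz
      (sub_neg.2 hgt))
    exact ((hbd q hq).resolve_left fun e => by
      linarith [(hC q hq.1).1, show C - h q ≤ 0 from hqC]).symm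

end IsClassicalSol

theorem component_of_h1_lt_h_lt_h2_touches_parabolic_boundary_general
    (k : ℕ) (T : EReal)
    (h h₁ h₂ : ℝ × ℝ → ℝ)
    (hc : ContinuousOn h {p : ℝ × ℝ | p.1 ∈ Icc (0:ℝ) 1 ∧ 0 ≤ p.2 ∧ (p.2 : EReal) < T})
    (hc1 : ContinuousOn h₁ {p : ℝ × ℝ | p.1 ∈ Icc (0:ℝ) 1 ∧ 0 ≤ p.2 ∧ (p.2 : EReal) < T})
    (hc2 : ContinuousOn h₂ {p : ℝ × ℝ | p.1 ∈ Icc (0:ℝ) 1 ∧ 0 ≤ p.2 ∧ (p.2 : EReal) < T})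
    (hs : IsClassicalSol k {p : ℝ × ℝ | p.1 ∈ Ioo (0:ℝ) 1 ∧ 0 < p.2 ∧ (p.2 : EReal) < T} h)
    (hs1 : IsClassicalSol k {p : ℝ × ℝ | p.1 ∈ Ioo (0:ℝ) 1 ∧ 0 < p.2 ∧ (p.2 : EReal) < T} h₁)
    (hs2 : IsClassicalSol k {p : ℝ × ℝ | p.1 ∈ Ioo (0:ℝ) 1 ∧ 0 < p.2 ∧ (p.2 : EReal) < T} h₂)
    (hzero1 :
      (∀ t : ℝ, 0 ≤ t → (t : EReal) < T → h (0, t) ≠ h₁ (0, t)) ∨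
      ∃ m : ℤ, ∀ t : ℝ, 0 ≤ t → (t : EReal) < T →
        h (0, t) = (m : ℝ) * π ∧ h₁ (0, t) = (m : ℝ) * π)
    (hzero2 :
      (∀ t : ℝ, 0 ≤ t → (t : EReal) < T → h (0, t) ≠ h₂ (0, t)) ∨
      ∃ m : ℤ, ∀ t : ℝ, 0 ≤ t → (t : EReal) < T →
        h (0, t) = (m : ℝ) * π ∧ h₂ (0, t) = (m : ℝ) * π)
    (t₁ t₂ : ℝ) (ht₁ : 0 ≤ t₁) (ht₂ : (t₂ : EReal) < T)
    (R : ℝ) (hR : R ≤ 1)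
    (Γ : Set (ℝ × ℝ)) (p₀ : ℝ × ℝ)
    (hp₀ : p₀ ∈ {p : ℝ × ℝ | p ∈ Icc 0 R ×ˢ Icc t₁ t₂ ∧ h₁ p < h p ∧ h p < h₂ p})
    (hΓ : Γ = connectedComponentIn
      {p : ℝ × ℝ | p ∈ Icc 0 R ×ˢ Icc t₁ t₂ ∧ h₁ p < h p ∧ h p < h₂ p} p₀)
    (hC : ∃ C : ℝ, ∀ q ∈ closure Γ, h₁ q < C ∧ C < h₂ q) :
    (Γ ∩ ((({0} : Set ℝ) ×ˢ Icc t₁ t₂) ∪ (({R} : Set ℝ) ×ˢ Icc t₁ t₂)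
        ∪ (Icc 0 R ×ˢ ({t₁} : Set ℝ)))).Nonempty := by
  obtain ⟨C, hC⟩ := hC
  by_contra hΓbdry
  set B : Set (ℝ × ℝ) := Icc 0 R ×ˢ Icc t₁ t₂
  have hBconv : Convex ℝ B := (convex_Icc _ _).prod (convex_Icc _ _)
  have hBD : B ⊆ {p : ℝ × ℝ | p.1 ∈ Icc (0:ℝ) 1 ∧ 0 ≤ p.2 ∧ (p.2 : EReal) < T} :=
    fun p hp => ⟨⟨hp.1.1, hp.1.2.trans hR⟩, ht₁.trans hp.2.1,
      (EReal.coe_le_coe_iff.2 hp.2.2).trans_lt ht₂⟩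
  have hΓS : Γ ⊆ {p | p ∈ B ∧ h₁ p < h p ∧ h p < h₂ p} :=
    hΓ ▸ connectedComponentIn_subset _ _
  have hclD : closure Γ ⊆ _ :=
    (closure_minimal (fun p hp => (hΓS hp).1) (isClosed_Icc.prod isClosed_Icc)).trans hBD
  have hΓint : Γ ⊆ Ioo 0 R ×ˢ Ioc t₁ t₂ := fun p hp =>
    mem_Ioo_prod_Ioc_of_notMem (hΓS hp).1 fun hmem => hΓbdry ⟨p, hp, hmem⟩
  have hΓΩ : Γ ⊆ {p : ℝ × ℝ | p.1 ∈ Ioo (0:ℝ) 1 ∧ 0 < p.2 ∧ (p.2 : EReal) < T} :=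
    fun p hp => ⟨⟨(hΓint hp).1.1, (hΓint hp).1.2.trans_le hR⟩, ht₁.trans_lt (hΓint hp).2.1,
      (hBD (hΓS hp).1).2.2⟩
  have haxis (P : ℝ × ℝ → Prop) (hP : ∀ t : ℝ, 0 ≤ t → (t : EReal) < T → P (0, t)) :
      ∀ q ∈ closure Γ, q.1 = 0 → P q := fun q hq hq0 => by
    rw [show q = (0, q.2) from Prod.ext hq0 rfl]
    exact hP q.2 (hclD hq).2.1 (hclD hq).2.2
  refine (nonempty_of_mem (hΓ ▸ mem_connectedComponentIn hp₀)).ne_empty <|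
    (hs.mono hΓΩ).eq_empty_of_subset_Ioo_prod_Ioc (hs1.mono hΓΩ) (hs2.mono hΓΩ)
      (hc.mono hclD) (hc1.mono hclD) (hc2.mono hclD) (fun q hq => (hΓS hq).2) hΓint
      (fun q hq => hΓ ▸ connectedComponentIn_mem_nhdsWithin hBconv (fun p hp => hp.1)
        (hΓ ▸ hq) (mem_nhdsWithin_setOf_lt_lt (hc.mono hBD) (hc1.mono hBD) (hc2.mono hBD)
          (hΓS hq)))
      (fun q hq => eq_or_eq_of_mem_closure_connectedComponentIn hBconv
        (isClosed_Icc.prod isClosed_Icc) (hc.mono hBD) (hc1.mono hBD) (hc2.mono hBD)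
        (hΓ ▸ hq.1) (hΓ ▸ hq.2)) hC
      (hzero1.imp (haxis fun q => h q ≠ h₁ q) fun ⟨m, hm⟩ => ⟨m, haxis _ hm⟩)
      (hzero2.imp (fun h0 => haxis (fun q => h₂ q ≠ h q) fun t ht ht' => (h0 t ht ht').symm)
        fun ⟨m, hm⟩ => ⟨m, haxis (fun q => h₂ q = m * π ∧ h q = m * π)
          fun t ht ht' => (hm t ht ht').symm⟩)

/-- Paper's Lemma 6.3: let `Γ` be a nonempty connected component of
`{(r,t) ∈ [0,R] × [t₁,t₂] : h₁ < h < h₂}` separated from `h₁` and `h₂` by a constant `C`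
on its closure. Then `Γ` reaches the lateral or the initial part of the parabolic boundary. -/
theorem component_of_h1_lt_h_lt_h2_touches_parabolic_boundary
    (k : ℕ) (hk : 1 ≤ k) (T : EReal) (hT : 0 < T)
    (h h₁ h₂ : ℝ × ℝ → ℝ)
    (hc : ContinuousOn h {p : ℝ × ℝ | p.1 ∈ Icc (0:ℝ) 1 ∧ 0 ≤ p.2 ∧ (p.2 : EReal) < T})
    (hc1 : ContinuousOn h₁ {p : ℝ × ℝ | p.1 ∈ Icc (0:ℝ) 1 ∧ 0 ≤ p.2 ∧ (p.2 : EReal) < T})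
    (hc2 : ContinuousOn h₂ {p : ℝ × ℝ | p.1 ∈ Icc (0:ℝ) 1 ∧ 0 ≤ p.2 ∧ (p.2 : EReal) < T})
    (hs : IsClassicalSol k {p : ℝ × ℝ | p.1 ∈ Ioo (0:ℝ) 1 ∧ 0 < p.2 ∧ (p.2 : EReal) < T} h)
    (hs1 : IsClassicalSol k {p : ℝ × ℝ | p.1 ∈ Ioo (0:ℝ) 1 ∧ 0 < p.2 ∧ (p.2 : EReal) < T} h₁)
    (hs2 : IsClassicalSol k {p : ℝ × ℝ | p.1 ∈ Ioo (0:ℝ) 1 ∧ 0 < p.2 ∧ (p.2 : EReal) < T} h₂)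
    (hzero1 :
      (∀ t : ℝ, 0 ≤ t → (t : EReal) < T → h (0, t) ≠ h₁ (0, t)) ∨
      ∃ m : ℤ, ∀ t : ℝ, 0 ≤ t → (t : EReal) < T →
        h (0, t) = (m : ℝ) * π ∧ h₁ (0, t) = (m : ℝ) * π)
    (hzero2 :
      (∀ t : ℝ, 0 ≤ t → (t : EReal) < T → h (0, t) ≠ h₂ (0, t)) ∨
      ∃ m : ℤ, ∀ t : ℝ, 0 ≤ t → (t : EReal) < T →
        h (0, t) = (m : ℝ) * π ∧ h₂ (0, t) = (m : ℝ) * π)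
    (t₁ t₂ : ℝ) (ht₁ : 0 ≤ t₁) (ht12 : t₁ < t₂) (ht₂ : (t₂ : EReal) < T)
    (R : ℝ) (hRpos : 0 < R) (hR : R ≤ 1)
    (Γ : Set (ℝ × ℝ)) (p₀ : ℝ × ℝ)
    (hp₀ : p₀ ∈ {p : ℝ × ℝ | p ∈ Icc 0 R ×ˢ Icc t₁ t₂ ∧ h₁ p < h p ∧ h p < h₂ p})
    (hΓ : Γ = connectedComponentIn
      {p : ℝ × ℝ | p ∈ Icc 0 R ×ˢ Icc t₁ t₂ ∧ h₁ p < h p ∧ h p < h₂ p} p₀)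
    (hC : ∃ C : ℝ, ∀ q ∈ closure Γ, h₁ q < C ∧ C < h₂ q) :
    (Γ ∩ ((({0} : Set ℝ) ×ˢ Icc t₁ t₂) ∪ (({R} : Set ℝ) ×ˢ Icc t₁ t₂)
        ∪ (Icc 0 R ×ˢ ({t₁} : Set ℝ)))).Nonempty :=
  component_of_h1_lt_h_lt_h2_touches_parabolic_boundary_general k T h h₁ h₂ hc hc1 hc2 hs hs1 hs2
    hzero1 hzero2 t₁ t₂ ht₁ ht₂ R hR Γ p₀ hp₀ hΓ hC
end

section
/- Let k ≥ 1 be an integer and 0 < T < ∞. Let h : (0,1] × (0,T) → ℝ be continuously differentiable in r, and define the energy density e(r,t) = (∂_r h(r,t))² + k²·sin²(h(r,t))/r². Assume the finite-energy bound E₀ := sup over t ∈ (0,T) of (1/2)·∫_{B²} e(|x|,t) dx < ∞, where B² is the open unit disc of ℝ². Then for every point x₀ of the closed unit disc with x₀ ≠ 0 and every ε > 0 there exists δ > 0 such that for every R with 0 < R < δ: limsup as t → T⁻ of (1/2)·∫_{B_R(x₀) ∩ B²} e(|x|,t) dx ≤ ε. -/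
/-!
The energy density is radial, so the energy in `B_R(x₀) ∩ B²` equals the energy in
`B_R(y) ∩ B²` for every `y` with `|y| = |x₀|`: a reflection maps one region onto the other.
Given `N`, pick `N` distinct points on the circle of radius `|x₀| > 0`; for `R` small the
discs `B_R(y)` around them are disjoint, so `N` times the local energy is at most the total
energy, which is at most `E₀`. Taking `N > E₀ / ε` gives the bound at every time `t < T`.
-/

open Real Set MeasureTheory Metric Filter Topology
open scoped ENNReal

open Function in
theorem Metric.exists_pos_pairwise_disjoint_ball {ι X : Type*} [Finite ι] [MetricSpace X]
    {c : ι → X} (hc : Injective c) :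
    ∃ δ > 0, ∀ R < δ, Pairwise (Disjoint on fun i => ball (c i) R) := by
  have hsep : ∀ᶠ δ in 𝓝 (0 : ℝ), ∀ i j, i ≠ j → δ < dist (c i) (c j) / 2 := by
    simp only [eventually_all]
    exact fun i j hij => eventually_lt_nhds (half_pos (dist_pos.2 (hc.ne hij)))
  obtain ⟨δ, hδ, hδpos⟩ := ((hsep.filter_mono nhdsWithin_le_nhds).and
    (self_mem_nhdsWithin : Ioi (0 : ℝ) ∈ 𝓝[>] 0)).exists
  exact ⟨δ, hδpos, fun R hR i j hij => ball_disjoint_ball (by linarith [hδ i j hij])⟩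

theorem sphere_zero_infinite {E : Type*} [NormedAddCommGroup E] [NormedSpace ℝ E]
    (hE : 1 < Module.rank ℝ E) {r : ℝ} (hr : 0 < r) : (sphere (0 : E) r).Infinite := by
  have : Nontrivial E := rank_pos_iff_nontrivial.1 (zero_lt_one.trans hE)
  obtain ⟨x, hx⟩ := (NormedSpace.sphere_nonempty (x := (0 : E))).2 hr.le
  have hx_ne : x ≠ 0 := ne_zero_of_mem_sphere hr.ne' ⟨x, hx⟩
  refine (isPreconnected_sphere hE 0 r).infinite_of_nontrivial ⟨x, hx, -x, by simpa using hx, ?_⟩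
  intro h
  apply hx_ne
  linear_combination (norm := module) (2⁻¹ : ℝ) • h

section InnerProductSpace

variable {E : Type*} [NormedAddCommGroup E] [InnerProductSpace ℝ E]

theorem exists_linearIsometryEquiv_apply_eq {x y : E} (h : ‖x‖ = ‖y‖) :
    ∃ ρ : E ≃ₗᵢ[ℝ] E, ρ x = y :=
  ⟨(ℝ ∙ (x - y))ᗮ.reflection, Submodule.reflection_sub h⟩

variable [FiniteDimensional ℝ E] [MeasurableSpace E] [BorelSpace E]

theorem setLIntegral_ball_inter_ball_zero_eq_of_norm_eq {x y : E} (h : ‖x‖ = ‖y‖)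
    (g : ℝ → ℝ≥0∞) (R r : ℝ) :
    ∫⁻ z in ball x R ∩ ball 0 r, g ‖z‖ = ∫⁻ z in ball y R ∩ ball 0 r, g ‖z‖ := by
  obtain ⟨ρ, rfl⟩ := exists_linearIsometryEquiv_apply_eq h
  have hpre : ρ ⁻¹' (ball (ρ x) R ∩ ball 0 r) = ball x R ∩ ball 0 r := by
    ext z
    simp
  calc ∫⁻ z in ball x R ∩ ball 0 r, g ‖z‖
      = ∫⁻ z in ρ ⁻¹' (ball (ρ x) R ∩ ball 0 r), g ‖ρ z‖ := by simp only [hpre, ρ.norm_map]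
    _ = ∫⁻ z in ball (ρ x) R ∩ ball 0 r, g ‖z‖ :=
      ρ.measurePreserving.setLIntegral_comp_preimage_emb
        ρ.toMeasurableEquiv.measurableEmbedding (fun z => g ‖z‖) _

theorem exists_pos_natCast_mul_setLIntegral_ball_inter_le (hE : 1 < Module.rank ℝ E) {x₀ : E}
    (hx₀ : x₀ ≠ 0) (N : ℕ) :
    ∃ δ > 0, ∀ R < δ, ∀ (g : ℝ → ℝ≥0∞) (r : ℝ),
      N * ∫⁻ z in ball x₀ R ∩ ball 0 r, g ‖z‖ ≤ ∫⁻ z in ball (0 : E) r, g ‖z‖ := by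
  have hS := sphere_zero_infinite hE (norm_pos_iff.2 hx₀)
  let c : Fin N → sphere (0 : E) ‖x₀‖ := hS.natEmbedding _ ∘ Fin.val
  have hc : Function.Injective (fun j => (c j : E)) :=
    Subtype.val_injective.comp ((hS.natEmbedding _).injective.comp Fin.val_injective)
  obtain ⟨δ, hδ, hdisj⟩ := exists_pos_pairwise_disjoint_ball hc
  refine ⟨δ, hδ, fun R hR g r => ?_⟩
  have hnorm : ∀ j, ‖x₀‖ = ‖(c j : E)‖ := fun j => by simp
  calc N * ∫⁻ z in ball x₀ R ∩ ball 0 r, g ‖z‖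
      = ∑ j, ∫⁻ z in ball (c j : E) R ∩ ball 0 r, g ‖z‖ := by
        simp [← setLIntegral_ball_inter_ball_zero_eq_of_norm_eq (hnorm _)]
    _ = ∫⁻ z in ⋃ j, ball (c j : E) R ∩ ball 0 r, g ‖z‖ := by
        rw [lintegral_iUnion (fun _ => measurableSet_ball.inter measurableSet_ball)
          (fun i j hij => (hdisj R hR hij).mono inter_subset_left inter_subset_left), tsum_fintype]
    _ ≤ ∫⁻ z in ball (0 : E) r, g ‖z‖ :=
        lintegral_mono_set (iUnion_subset fun _ => inter_subset_right)

end InnerProductSpace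

theorem no_energy_concentration_away_from_origin_general
    (T : ℝ) (hT : 0 < T)
    (e : ℝ → ℝ → ℝ)
    (E₀ : ℝ≥0∞) (hE₀ : E₀ ≠ ⊤)
    (hen : ∀ t ∈ Ioo (0:ℝ) T,
      2⁻¹ * ∫⁻ x in ball (0 : EuclideanSpace ℝ (Fin 2)) 1, ENNReal.ofReal (e ‖x‖ t) ≤ E₀) :
    ∀ x₀ : EuclideanSpace ℝ (Fin 2), x₀ ∈ closedBall 0 1 → x₀ ≠ 0 →
      ∀ ε : ℝ, 0 < ε → ∃ δ : ℝ, 0 < δ ∧ ∀ R : ℝ, 0 < R → R < δ →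
        Filter.limsup
          (fun t => 2⁻¹ * ∫⁻ x in ball x₀ R ∩ ball (0 : EuclideanSpace ℝ (Fin 2)) 1,
            ENNReal.ofReal (e ‖x‖ t))
          (nhdsWithin T (Iio T)) ≤ ENNReal.ofReal ε := by
  intro x₀ _ hx₀ ε hε
  obtain ⟨N, hN⟩ := ENNReal.exists_nat_mul_gt (ENNReal.ofReal_pos.2 hε).ne' hE₀
  have hrank : 1 < Module.rank ℝ (EuclideanSpace ℝ (Fin 2)) := by
    rw [← Module.finrank_eq_rank, finrank_euclideanSpace_fin]
    norm_num
  obtain ⟨δ, hδ, hpack⟩ := exists_pos_natCast_mul_setLIntegral_ball_inter_le hrank hx₀ N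
  refine ⟨δ, hδ, fun R _ hR => limsup_le_of_le (by isBoundedDefault) ?_⟩
  filter_upwards [Ioo_mem_nhdsLT hT] with t ht
  refine (lt_of_mul_lt_mul_left' (a := (N : ℝ≥0∞)) ?_).le
  calc N * (2⁻¹ * ∫⁻ x in ball x₀ R ∩ ball 0 1, ENNReal.ofReal (e ‖x‖ t))
      = 2⁻¹ * (N * ∫⁻ x in ball x₀ R ∩ ball 0 1, ENNReal.ofReal (e ‖x‖ t)) := mul_left_comm _ _ _
    _ ≤ 2⁻¹ * ∫⁻ x in ball (0 : EuclideanSpace ℝ (Fin 2)) 1, ENNReal.ofReal (e ‖x‖ t) := by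
        gcongr
        exact hpack R hR (fun r => ENNReal.ofReal (e r t)) 1
    _ ≤ E₀ := hen t ht
    _ < N * ENNReal.ofReal ε := hN

/-- Paper's Lemma 4.1 (no concentration of energy away from the origin for `k`-equivariant
solutions): if the radial energy density `e(r,t) = (∂_r h)² + k² sin²(h)/r²` has uniformly
bounded total energy over the unit disc, then around any point `x₀ ≠ 0` of the closed disc
the energy does not concentrate as `t → T⁻`. -/
theorem no_energy_concentration_away_from_origin
    (k : ℕ) (hk : 1 ≤ k) (T : ℝ) (hT : 0 < T)
    (h : ℝ × ℝ → ℝ)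
    (hdiff : ∀ t ∈ Ioo (0:ℝ) T, ∀ r ∈ Ioc (0:ℝ) 1,
      DifferentiableWithinAt ℝ (fun r' => h (r', t)) (Ioc 0 1) r)
    (hderivcont : ∀ t ∈ Ioo (0:ℝ) T,
      ContinuousOn (fun r => derivWithin (fun r' => h (r', t)) (Ioc 0 1) r) (Ioc 0 1))
    (e : ℝ → ℝ → ℝ)
    (he : ∀ r t, e r t =
      derivWithin (fun r' => h (r', t)) (Ioc 0 1) r ^ 2
        + (k : ℝ) ^ 2 * sin (h (r, t)) ^ 2 / r ^ 2)
    (E₀ : ℝ≥0∞) (hE₀ : E₀ ≠ ⊤)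
    (hen : ∀ t ∈ Ioo (0:ℝ) T,
      2⁻¹ * ∫⁻ x in ball (0 : EuclideanSpace ℝ (Fin 2)) 1, ENNReal.ofReal (e ‖x‖ t) ≤ E₀) :
    ∀ x₀ : EuclideanSpace ℝ (Fin 2), x₀ ∈ closedBall 0 1 → x₀ ≠ 0 →
      ∀ ε : ℝ, 0 < ε → ∃ δ : ℝ, 0 < δ ∧ ∀ R : ℝ, 0 < R → R < δ →
        Filter.limsup
          (fun t => 2⁻¹ * ∫⁻ x in ball x₀ R ∩ ball (0 : EuclideanSpace ℝ (Fin 2)) 1,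
            ENNReal.ofReal (e ‖x‖ t))
          (nhdsWithin T (Iio T)) ≤ ENNReal.ofReal ε :=
  no_energy_concentration_away_from_origin_general T hT e E₀ hE₀ hen
end
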